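/- arXiv:1406.1031 — 11 statements merged into one kernel-verified Lean document; each statement's English description precedes it below -/
import Mathlib

section
/- Let B be a nonzero n×(n−1) real matrix whose nonzero columns are linearly independent, and let b ∈ ℝⁿ with b ∉ Range(B). Then the symmetric matrix A := BBᵀ − bbᵀ has at least one positive eigenvalue and exactly one negative eigenvalue. -/
/-! For `A = BBᵀ - bbᵀ` the quadratic form is `q(x) = ‖Bᵀx‖² - (b ⬝ x)²`, which is nonnegative on
the hyperplane `b⊥`. Hence `A` has at most one negative eigenvalue: two orthonormal eigenvectors
with negative eigenvalues would span a plane on which `q < 0`, and that plane meets `b⊥`.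
Since `b ∉ Range B` there is `w ∈ ker Bᵀ` with `b ⬝ w ≠ 0`, so `q(w) < 0`; and correcting any `x`
with `Bᵀx ≠ 0` by a multiple of `w` gives `u ∈ b⊥` with `q(u) = ‖Bᵀu‖² > 0`. -/

open Matrix

namespace Matrix

variable {m k : Type*} [Fintype m]

theorem dotProduct_mulVec_mul_transpose_sub_vecMulVec [Fintype k] {R : Type*} [CommRing R]
    (B : Matrix m k R) (b x : m → R) :
    x ⬝ᵥ ((B * Bᵀ - vecMulVec b b) *ᵥ x) = (Bᵀ *ᵥ x) ⬝ᵥ (Bᵀ *ᵥ x) - (b ⬝ᵥ x) * (b ⬝ᵥ x) := by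
  rw [sub_mulVec, dotProduct_sub, ← mulVec_mulVec, dotProduct_mulVec, ← mulVec_transpose,
    vecMulVec_mulVec, dotProduct_smul, op_smul_eq_mul, dotProduct_comm x b]

theorem exists_transpose_mulVec_eq_zero_and_dotProduct_ne_zero [Fintype k] {K : Type*} [Field K]
    [DecidableEq m] (B : Matrix m k K) {b : m → K} (hb : ¬ ∃ y, B *ᵥ y = b) :
    ∃ w, Bᵀ *ᵥ w = 0 ∧ b ⬝ᵥ w ≠ 0 := by
  have hb' : b ∉ LinearMap.range B.mulVecLin := fun ⟨y, hy⟩ => hb ⟨y, hy⟩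
  obtain ⟨f, hfb, hf⟩ := Submodule.exists_dual_map_eq_bot_of_notMem hb' inferInstance
  set w := (dotProductEquiv K m).symm f
  have hw : ∀ v, w ⬝ᵥ v = f v := fun v => by
    rw [← dotProductEquiv_apply_apply, LinearEquiv.apply_symm_apply]
  refine ⟨w, ?_, by rwa [dotProduct_comm, hw]⟩
  rw [mulVec_transpose, ← dotProduct_eq_zero_iff]
  intro y
  rw [← dotProduct_mulVec, hw]
  exact (Submodule.eq_bot_iff _).mp hf _ (Submodule.mem_map_of_mem ⟨y, rfl⟩)

theorem exists_dotProduct_eq_zero_and_transpose_mulVec_ne_zero {K : Type*} [Field K]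
    {B : Matrix m k K} (hB : B ≠ 0) {b w : m → K} (hBw : Bᵀ *ᵥ w = 0) (hbw : b ⬝ᵥ w ≠ 0) :
    ∃ u, b ⬝ᵥ u = 0 ∧ Bᵀ *ᵥ u ≠ 0 := by
  obtain ⟨x, hx⟩ : ∃ x, Bᵀ *ᵥ x ≠ 0 := by
    by_contra! h
    exact hB (transpose_eq_zero.mp (ext_iff_mulVec.mpr fun x => by simp [h x]))
  refine ⟨x - (b ⬝ᵥ x / b ⬝ᵥ w) • w, ?_, ?_⟩
  · rw [dotProduct_sub, dotProduct_smul, smul_eq_mul, div_mul_cancel₀ _ hbw, sub_self]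
  · rwa [mulVec_sub, mulVec_smul, hBw, smul_zero, sub_zero]

end Matrix

namespace Matrix.IsHermitian

section RCLike

open scoped ComplexOrder

variable {n 𝕜 : Type*} [Fintype n] [DecidableEq n] [RCLike 𝕜] {A : Matrix n n 𝕜}

theorem posSemidef_neg_iff_eigenvalues_nonpos (hA : A.IsHermitian) :
    (-A).PosSemidef ↔ hA.eigenvalues ≤ 0 := by
  conv_lhs => rw [hA.spectral_theorem, ← map_neg, diagonal_neg]
  simp [Unitary.isUnit_coe.posSemidef_star_right_conjugate_iff, posSemidef_diagonal_iff, Pi.le_def]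

theorem exists_eigenvalues_neg_of_re_dotProduct_mulVec_neg (hA : A.IsHermitian) {x : n → 𝕜}
    (hx : RCLike.re (star x ⬝ᵥ (A *ᵥ x)) < 0) : ∃ i, hA.eigenvalues i < 0 := by
  by_contra! h
  exact hx.not_ge ((hA.posSemidef_iff_eigenvalues_nonneg.mpr h).re_dotProduct_nonneg x)

theorem exists_eigenvalues_pos_of_re_dotProduct_mulVec_pos (hA : A.IsHermitian) {x : n → 𝕜}
    (hx : 0 < RCLike.re (star x ⬝ᵥ (A *ᵥ x))) : ∃ i, 0 < hA.eigenvalues i := by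
  by_contra! h
  have := (hA.posSemidef_neg_iff_eigenvalues_nonpos.mpr h).re_dotProduct_nonneg x
  rw [neg_mulVec, dotProduct_neg, map_neg] at this
  linarith

end RCLike

section Real

variable {n : Type*} [Fintype n] [DecidableEq n] {A : Matrix n n ℝ}

theorem dotProduct_eigenvectorBasis (hA : A.IsHermitian) (i j : n) :
    ⇑(hA.eigenvectorBasis i) ⬝ᵥ ⇑(hA.eigenvectorBasis j) = if i = j then 1 else 0 := by
  rw [dotProduct_comm, ← orthonormal_iff_ite.mp hA.eigenvectorBasis.orthonormal i j]
  rfl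

theorem dotProduct_mulVec_smul_add_smul_eigenvectorBasis (hA : A.IsHermitian) {i j : n}
    (hij : i ≠ j) (α β : ℝ) :
    (α • ⇑(hA.eigenvectorBasis i) + β • ⇑(hA.eigenvectorBasis j)) ⬝ᵥ
        (A *ᵥ (α • ⇑(hA.eigenvectorBasis i) + β • ⇑(hA.eigenvectorBasis j))) =
      α ^ 2 * hA.eigenvalues i + β ^ 2 * hA.eigenvalues j := by
  simp only [mulVec_add, mulVec_smul, hA.mulVec_eigenvectorBasis, add_dotProduct, dotProduct_add,
    smul_dotProduct, dotProduct_smul, hA.dotProduct_eigenvectorBasis, smul_eq_mul, if_neg hij,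
    if_neg hij.symm, if_pos]
  ring

theorem card_filter_eigenvalues_neg_le_one (hA : A.IsHermitian) (b : n → ℝ)
    (hb : ∀ x, b ⬝ᵥ x = 0 → 0 ≤ x ⬝ᵥ (A *ᵥ x)) :
    (Finset.univ.filter fun i => hA.eigenvalues i < 0).card ≤ 1 := by
  refine Finset.card_le_one.mpr fun i hi j hj => by_contra fun hij => ?_
  simp only [Finset.mem_filter, Finset.mem_univ, true_and] at hi hj
  set v := fun l => ⇑(hA.eigenvectorBasis l)
  obtain ⟨α, β, hαβ, hbv⟩ : ∃ α β : ℝ, (α ≠ 0 ∨ β ≠ 0) ∧ b ⬝ᵥ (α • v i + β • v j) = 0 := by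
    by_cases hbi : b ⬝ᵥ v i = 0
    · exact ⟨1, 0, by simp, by simp [hbi]⟩
    · refine ⟨b ⬝ᵥ v j, -(b ⬝ᵥ v i), Or.inr (neg_ne_zero.mpr hbi), ?_⟩
      simp only [dotProduct_add, dotProduct_smul, smul_eq_mul]
      ring
  have hq := hb _ hbv
  rw [hA.dotProduct_mulVec_smul_add_smul_eigenvectorBasis hij] at hq
  rcases hαβ with h | h <;> nlinarith [sq_pos_of_ne_zero h, sq_nonneg α, sq_nonneg β]

end Real

end Matrix.IsHermitian

theorem stmt_1_general (n : ℕ) (B : Matrix (Fin (n+1)) (Fin n) ℝ) (b : Fin (n+1) → ℝ)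
    (hB0 : B ≠ 0)
    (hb : ¬ ∃ y : Fin n → ℝ, B.mulVec y = b)
    (hA : (B * B.transpose - vecMulVec b b).IsHermitian) :
    0 < (Finset.univ.filter fun i => 0 < hA.eigenvalues i).card ∧
      (Finset.univ.filter fun i => hA.eigenvalues i < 0).card = 1 := by
  obtain ⟨w, hBw, hbw⟩ := exists_transpose_mulVec_eq_zero_and_dotProduct_ne_zero B hb
  obtain ⟨u, hbu, hBu⟩ := exists_dotProduct_eq_zero_and_transpose_mulVec_ne_zero hB0 hBw hbw
  have hq := dotProduct_mulVec_mul_transpose_sub_vecMulVec B b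
  obtain ⟨i, hi⟩ : ∃ i, hA.eigenvalues i < 0 := by
    refine hA.exists_eigenvalues_neg_of_re_dotProduct_mulVec_neg (x := w) ?_
    simpa [hq, hBw] using mul_self_pos.mpr hbw
  obtain ⟨j, hj⟩ : ∃ j, 0 < hA.eigenvalues j := by
    refine hA.exists_eigenvalues_pos_of_re_dotProduct_mulVec_pos (x := u) ?_
    simpa [hq, hbu] using dotProduct_star_self_pos_iff.mpr hBu
  have hle := hA.card_filter_eigenvalues_neg_le_one b fun x hx => by
    simpa [hq, hx] using dotProduct_star_self_nonneg (Bᵀ *ᵥ x)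
  have hneg : 0 < (Finset.univ.filter fun i => hA.eigenvalues i < 0).card :=
    Finset.card_pos.mpr ⟨i, by simpa using hi⟩
  exact ⟨Finset.card_pos.mpr ⟨j, by simpa using hj⟩, by omega⟩

theorem stmt_1 (n : ℕ) (B : Matrix (Fin (n+1)) (Fin n) ℝ) (b : Fin (n+1) → ℝ)
    (hB0 : B ≠ 0)
    (hB : LinearIndependent ℝ
      (fun j : {j : Fin n // B.transpose j ≠ 0} => B.transpose (j : Fin n)))
    (hb : ¬ ∃ y : Fin n → ℝ, B.mulVec y = b)
    (hA : (B * B.transpose - vecMulVec b b).IsHermitian) :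
    0 < (Finset.univ.filter fun i => 0 < hA.eigenvalues i).card ∧
      (Finset.univ.filter fun i => hA.eigenvalues i < 0).card = 1 :=
  stmt_1_general n B b hB0 hb hA
end

section
/- Let A and Ā be symmetric n×n real matrices such that {x : xᵀAx ≤ 0} = {x : xᵀĀx ≤ 0}, and suppose A has both a negative and a positive eigenvalue (λ_min(A) < 0 < λ_max(A)). Then there exists ρ > 0 such that Ā = ρA. -/
/-!
Let `Q`, `Q'` be the two quadratic forms. Equal sublevel sets force equal zero sets: a zero of
`Q` at which `Q' < 0` could be pushed into `{Q > 0}` along a direction `w` with `Q w > 0` while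
staying in `{Q' < 0}`. If `Q x` and `Q y` have opposite signs, the restriction
of `Q` to the line `y + t x` is a quadratic polynomial with two distinct real roots, which are
then roots of the restriction of `Q'` as well; hence the two polynomials are proportional and
`Q' y / Q y = Q' x / Q x`. Comparing every vector with a fixed `u`, `Q u < 0`, possibly through
`w`, gives `Q' = ρ Q` with `ρ = Q' u / Q u > 0`.
-/

open Filter Topology Matrix

theorem exists_ne_roots_of_mul_neg {a b c : ℝ} (hac : a * c < 0) :
    ∃ r₁ r₂, r₁ ≠ r₂ ∧ c + r₁ * b + r₁ ^ 2 * a = 0 ∧ c + r₂ * b + r₂ ^ 2 * a = 0 := by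
  have ha : a ≠ 0 := left_ne_zero_of_mul hac.ne
  have hD : 0 < discrim a b c := by rw [discrim]; nlinarith [sq_nonneg b]
  set s := √(discrim a b c)
  have hroot := quadratic_eq_zero_iff ha (Real.mul_self_sqrt hD.le).symm
  refine ⟨(-b + s) / (2 * a), (-b - s) / (2 * a), ?_, ?_, ?_⟩
  · rw [Ne, div_left_inj' (mul_ne_zero two_ne_zero ha)]
    linarith [Real.sqrt_pos.2 hD]
  · linear_combination (hroot _).2 (.inl rfl)
  · linear_combination (hroot _).2 (.inr rfl)

theorem mul_eq_mul_of_quadratic_roots_subset {a b c a' b' c' : ℝ} (hac : a * c < 0)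
    (h : ∀ t, c + t * b + t ^ 2 * a = 0 → c' + t * b' + t ^ 2 * a' = 0) :
    c' * a = a' * c := by
  obtain ⟨r₁, r₂, hne, h₁, h₂⟩ := exists_ne_roots_of_mul_neg (b := b) hac
  have h₁' := h r₁ h₁
  have h₂' := h r₂ h₂
  -- `a (c' + t b' + t² a') - a' (c + t b + t² a)` is affine in `t` and vanishes at `r₁ ≠ r₂`
  have hb : a * b' = a' * b := mul_left_cancel₀ (sub_ne_zero.2 hne) <| by
    linear_combination a * h₁' - a' * h₁ - a * h₂' + a' * h₂
  linear_combination a * h₁' - a' * h₁ - r₁ * hb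

namespace QuadraticMap

theorem map_add_smul {R M : Type*} [CommRing R] [AddCommGroup M] [Module R M]
    (Q : QuadraticForm R M) (x y : M) (t : R) :
    Q (x + t • y) = Q x + t * polar Q x y + t ^ 2 * Q y := by
  have := polar_smul_right (Q := Q) t x y
  rw [polar, QuadraticMap.map_smul, smul_eq_mul, smul_eq_mul] at this
  linear_combination this

variable {V : Type*} [AddCommGroup V] [Module ℝ V] {Q Q' : QuadraticForm ℝ V}

theorem tendsto_map_add_smul (Q : QuadraticForm ℝ V) (x y : V) :
    Tendsto (fun t : ℝ ↦ Q (x + t • y)) (𝓝 0) (𝓝 (Q x)) := by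
  simp_rw [map_add_smul]
  have : Continuous fun t : ℝ ↦ Q x + t * polar Q x y + t ^ 2 * Q y := by fun_prop
  simpa using this.tendsto 0

theorem lt_zero_of_nonpos_iff (h : ∀ x, Q x ≤ 0 ↔ Q' x ≤ 0) {w : V} (hw : 0 < Q w) {x : V}
    (hx : Q' x < 0) : Q x < 0 := by
  refine ((h x).2 hx.le).lt_of_ne fun hx0 ↦ ?_
  obtain ⟨σ, hσ, hσx⟩ : ∃ σ : ℝ, σ ≠ 0 ∧ 0 ≤ σ * polar Q x w := by
    rcases le_total 0 (polar Q x w) with hp | hp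
    · exact ⟨1, one_ne_zero, by simpa⟩
    · exact ⟨-1, by norm_num, by simpa⟩
  have hQ'pos : ∀ τ > 0, 0 < Q' (x + (σ * τ) • w) := fun τ hτ ↦ by
    have hQpos : 0 < Q (x + (σ * τ) • w) := by
      rw [map_add_smul, hx0]
      have : 0 < (σ * τ) ^ 2 := by positivity
      nlinarith
    exact not_le.1 fun h' ↦ hQpos.not_ge ((h _).2 h')
  have hlim : Tendsto (fun τ : ℝ ↦ Q' (x + (σ * τ) • w)) (𝓝[>] 0) (𝓝 (Q' x)) := by
    refine ((tendsto_map_add_smul Q' x w).comp ?_).mono_left nhdsWithin_le_nhds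
    exact (continuous_const_mul σ).tendsto' 0 0 (mul_zero σ)
  obtain ⟨τ, hτneg, hτpos⟩ := ((hlim.eventually (gt_mem_nhds hx)).and self_mem_nhdsWithin).exists
  exact (hQ'pos τ hτpos).not_gt hτneg

theorem eq_zero_of_nonpos_iff (h : ∀ x, Q x ≤ 0 ↔ Q' x ≤ 0) {w : V} (hw : 0 < Q w) {x : V}
    (hx : Q x = 0) : Q' x = 0 :=
  ((h x).1 hx.le).eq_of_not_lt fun hx' ↦ (lt_zero_of_nonpos_iff h hw hx').ne hx

theorem mul_eq_mul_of_mul_neg (h : ∀ x, Q x = 0 → Q' x = 0) {x y : V} (hxy : Q x * Q y < 0) :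
    Q' y * Q x = Q' x * Q y :=
  mul_eq_mul_of_quadratic_roots_subset hxy fun t ht ↦ by
    simpa only [map_add_smul] using h (y + t • x) (by rw [map_add_smul]; exact ht)

theorem exists_pos_smul_eq_of_nonpos_iff (h : ∀ x, Q x ≤ 0 ↔ Q' x ≤ 0) (hneg : ∃ u, Q u < 0)
    (hpos : ∃ w, 0 < Q w) : ∃ ρ : ℝ, 0 < ρ ∧ Q' = ρ • Q := by
  obtain ⟨u, hu⟩ := hneg
  obtain ⟨w, hw⟩ := hpos
  have hw' : 0 < Q' w := not_le.1 fun h' ↦ hw.not_ge ((h w).2 h')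
  have hu' : Q' u < 0 := lt_zero_of_nonpos_iff (fun x ↦ (h x).symm) hw' hu
  have hcross {x y : V} : Q x * Q y < 0 → Q' y * Q x = Q' x * Q y :=
    mul_eq_mul_of_mul_neg fun _ ↦ eq_zero_of_nonpos_iff h hw
  have hprop (x : V) : Q' x * Q u = Q' u * Q x := by
    rcases lt_trichotomy (Q x) 0 with hx | hx | hx
    · -- `Q x` and `Q u` have the same sign: compare both with `Q w`
      have hxw := hcross (x := x) (y := w) (by nlinarith)
      have huw := hcross (x := u) (y := w) (by nlinarith)
      refine mul_right_cancel₀ hw.ne' ?_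
      linear_combination Q x * huw - Q u * hxw
    · rw [hx, eq_zero_of_nonpos_iff h hw hx, zero_mul, mul_zero]
    · exact (hcross (by nlinarith)).symm
  refine ⟨Q' u / Q u, div_pos_of_neg_of_neg hu' hu, ext fun x ↦ ?_⟩
  rw [_root_.smul_apply, smul_eq_mul, div_mul_eq_mul_div, eq_div_iff hu.ne]
  exact hprop x

end QuadraticMap

namespace Matrix

variable {n R : Type*} [Fintype n] [DecidableEq n]

theorem toQuadraticForm'_apply [CommRing R] (M : Matrix n n R) (x : n → R) :
    M.toQuadraticForm' x = x ⬝ᵥ M *ᵥ x := by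
  simp [toQuadraticForm', toLinearMap₂'_apply']

theorem IsSymm.ext_of_dotProduct_mulVec [Field R] [NeZero (2 : R)]
    {M N : Matrix n n R} (hM : M.IsSymm) (hN : N.IsSymm)
    (h : ∀ x, x ⬝ᵥ M *ᵥ x = x ⬝ᵥ N *ᵥ x) : M = N :=
  toBilin'.injective <| LinearMap.BilinForm.ext_of_isSymm (isSymm_toBilin'_iff_isSymm.2 hM)
    (isSymm_toBilin'_iff_isSymm.2 hN) fun x ↦ by simpa only [toBilin'_apply'] using h x

theorem IsHermitian.toQuadraticForm'_eigenvectorBasis {A : Matrix n n ℝ} (hA : A.IsHermitian)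
    (i : n) : A.toQuadraticForm' (hA.eigenvectorBasis i) = hA.eigenvalues i := by
  simpa [toQuadraticForm'_apply] using (hA.eigenvalues_eq i).symm

end Matrix

theorem stmt_3 (n : ℕ) (A Abar : Matrix (Fin n) (Fin n) ℝ)
    (hA : A.IsHermitian) (hAbar : Abar.IsHermitian)
    (hset : {x : Fin n → ℝ | x ⬝ᵥ A.mulVec x ≤ 0} = {x : Fin n → ℝ | x ⬝ᵥ Abar.mulVec x ≤ 0})
    (hneg : ∃ i, hA.eigenvalues i < 0) (hpos : ∃ i, 0 < hA.eigenvalues i) :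
    ∃ ρ : ℝ, 0 < ρ ∧ Abar = ρ • A := by
  obtain ⟨i, hi⟩ := hneg
  obtain ⟨j, hj⟩ := hpos
  obtain ⟨ρ, hρ, hQ⟩ := QuadraticMap.exists_pos_smul_eq_of_nonpos_iff
    (Q := A.toQuadraticForm') (Q' := Abar.toQuadraticForm')
    (fun x ↦ by simpa only [toQuadraticForm'_apply, Set.mem_ofPred_eq] using Set.ext_iff.1 hset x)
    ⟨_, (hA.toQuadraticForm'_eigenvectorBasis i).trans_lt hi⟩
    ⟨_, hj.trans_eq (hA.toQuadraticForm'_eigenvectorBasis j).symm⟩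
  refine ⟨ρ, hρ, IsSymm.ext_of_dotProduct_mulVec hAbar (IsSymm.smul hA ρ) fun x ↦ ?_⟩
  simpa [toQuadraticForm'_apply, smul_mulVec] using congr($hQ x)
end

section
/- Let A be a symmetric n×n matrix with at least one positive eigenvalue and exactly one negative eigenvalue, with two spectral decompositions A = Q Diag(λ) Qᵀ = Q̄ Diag(λ̄) Q̄ᵀ where λ₁ < 0 and λ̄₁ < 0, so that λⱼ ≥ 0 and λ̄ⱼ ≥ 0 for j ≥ 2. Define (B, b) from the first decomposition by B = (λ₂^{1/2} q₂, …, λₙ^{1/2} qₙ) and b = (−λ₁)^{1/2} q₁, and similarly (B̄, b̄) from the second. Then the pair of cones {{x : ‖Bᵀx‖ ≤ bᵀx}, {x : ‖Bᵀx‖ ≤ −bᵀx}} equals the pair {{x : ‖B̄ᵀx‖ ≤ b̄ᵀx}, {x : ‖B̄ᵀx‖ ≤ −b̄ᵀx}}. -/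
open Matrix

noncomputable def euclNorm {m : ℕ} (v : Fin m → ℝ) : ℝ := Real.sqrt (v ⬝ᵥ v)

/-- `B` built from a spectral decomposition `A = Q Diag(lam) Qᵀ` with `lam 0 < 0`:
columns `sqrt(lam j) * q_j` for `j = 1, …, n`. -/
noncomputable def socB {n : ℕ} (Q : Matrix (Fin (n+1)) (Fin (n+1)) ℝ) (lam : Fin (n+1) → ℝ) :
    Matrix (Fin (n+1)) (Fin n) ℝ :=
  Matrix.of fun i (j : Fin n) => Real.sqrt (lam j.succ) * Q i j.succ

/-- `b` built from a spectral decomposition: `b = sqrt(-lam 0) * q_0`. -/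
noncomputable def socb {n : ℕ} (Q : Matrix (Fin (n+1)) (Fin (n+1)) ℝ) (lam : Fin (n+1) → ℝ) :
    Fin (n+1) → ℝ :=
  fun i => Real.sqrt (-(lam 0)) * Q i 0

lemma dotA_eq (n : ℕ) (Q : Matrix (Fin (n+1)) (Fin (n+1)) ℝ) (lam : Fin (n+1) → ℝ)
    (x : Fin (n+1) → ℝ) :
    x ⬝ᵥ (Q * Matrix.diagonal lam * Q.transpose).mulVec x
      = ∑ j, lam j * (∑ i, Q i j * x i) * (∑ i, Q i j * x i) := by
  rw [← Matrix.mulVec_mulVec, ← Matrix.mulVec_mulVec, Matrix.dotProduct_mulVec,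
    ← Matrix.mulVec_transpose]
  rw [dotProduct]
  refine Finset.sum_congr rfl fun j _ => ?_
  rw [Matrix.mulVec_diagonal]
  have : (Qᵀ *ᵥ x) j = ∑ i, Q i j * x i := by
    simp [Matrix.mulVec, dotProduct, Matrix.transpose_apply]
  rw [this]; ring

lemma dot_eq (n : ℕ) (Q : Matrix (Fin (n+1)) (Fin (n+1)) ℝ) (lam : Fin (n+1) → ℝ)
    (hneg : lam 0 < 0) (hnonneg : ∀ j : Fin (n+1), j ≠ 0 → 0 ≤ lam j) (x : Fin (n+1) → ℝ) :
    ((socB Q lam).transpose.mulVec x) ⬝ᵥ ((socB Q lam).transpose.mulVec x)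
      = x ⬝ᵥ (Q * Matrix.diagonal lam * Q.transpose).mulVec x
        + (socb Q lam ⬝ᵥ x) * (socb Q lam ⬝ᵥ x) := by
  have hy : ∀ j, ((socB Q lam).transpose.mulVec x) j
      = Real.sqrt (lam j.succ) * ∑ i, Q i j.succ * x i := by
    intro j
    simp [Matrix.mulVec, dotProduct, socB, Finset.mul_sum, mul_assoc]
  have hb : socb Q lam ⬝ᵥ x = Real.sqrt (-(lam 0)) * ∑ i, Q i 0 * x i := by
    simp [dotProduct, socb, Finset.mul_sum, mul_assoc]
  rw [dotProduct, dotA_eq, hb]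
  simp only [hy]
  rw [Fin.sum_univ_succ (f := fun j => lam j * (∑ i, Q i j * x i) * (∑ i, Q i j * x i))]
  have h0 : Real.sqrt (-(lam 0)) * Real.sqrt (-(lam 0)) = -(lam 0) :=
    Real.mul_self_sqrt (by linarith)
  have hj : ∀ j : Fin n,
      (Real.sqrt (lam j.succ) * ∑ i, Q i j.succ * x i) * (Real.sqrt (lam j.succ) * ∑ i, Q i j.succ * x i)
        = lam j.succ * (∑ i, Q i j.succ * x i) * (∑ i, Q i j.succ * x i) := by
    intro j
    rw [mul_mul_mul_comm, Real.mul_self_sqrt (hnonneg _ (Fin.succ_ne_zero j)), ← mul_assoc]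
  simp only [hj]
  rw [mul_mul_mul_comm, h0]
  ring

lemma socb_pm (n : ℕ) (A Q Qbar : Matrix (Fin (n+1)) (Fin (n+1)) ℝ)
    (lam lambar : Fin (n+1) → ℝ)
    (hQ1 : Q * Q.transpose = 1) (hQ2 : Q.transpose * Q = 1)
    (hQbar2 : Qbar.transpose * Qbar = 1)
    (hA : A = Q * Matrix.diagonal lam * Q.transpose)
    (hAbar : A = Qbar * Matrix.diagonal lambar * Qbar.transpose)
    (hneg : lam 0 < 0) (hnonneg : ∀ j : Fin (n+1), j ≠ 0 → 0 ≤ lam j)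
    (hnegbar : lambar 0 < 0) :
    socb Qbar lambar = socb Q lam ∨ socb Qbar lambar = -(socb Q lam) := by
  set s : ℝ := Real.sqrt (-(lambar 0)) with hs
  set bb : Fin (n+1) → ℝ := socb Qbar lambar with hbb
  -- bb as Qbar *ᵥ single
  have hbb_eq : bb = Qbar.mulVec (Pi.single 0 s) := by
    funext i
    simp [hbb, socb, Matrix.mulVec_single]
    ring
  -- eigenvector equation
  have heig : A.mulVec bb = lambar 0 • bb := by
    rw [hbb_eq, hAbar, ← Matrix.mulVec_mulVec, ← Matrix.mulVec_mulVec]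
    have hmid : Qbar.transpose.mulVec (Qbar.mulVec (Pi.single 0 s)) = Pi.single 0 s := by
      rw [Matrix.mulVec_mulVec, hQbar2, Matrix.one_mulVec]
    rw [hmid]
    have : (Matrix.diagonal lambar).mulVec (Pi.single 0 s) = Pi.single 0 (lambar 0 * s) := by
      funext j
      rw [Matrix.mulVec_diagonal]
      rcases eq_or_ne j 0 with h | h
      · subst h; simp
      · simp [Pi.single_eq_of_ne h]
    rw [this]
    have : (Pi.single 0 (lambar 0 * s) : Fin (n+1) → ℝ) = lambar 0 • (Pi.single 0 s : Fin (n+1) → ℝ) := by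
      funext j
      rcases eq_or_ne j 0 with h | h
      · subst h; simp
      · simp [Pi.single_eq_of_ne h]
    rw [this, Matrix.mulVec_smul]
  set c : Fin (n+1) → ℝ := Q.transpose.mulVec bb with hc
  have hDc : (Matrix.diagonal lam).mulVec c = lambar 0 • c := by
    have h1 : Q.transpose * A = Matrix.diagonal lam * Q.transpose := by
      rw [hA, ← Matrix.mul_assoc, ← Matrix.mul_assoc, hQ2, Matrix.one_mul]
    calc (Matrix.diagonal lam).mulVec c
        = (Matrix.diagonal lam * Q.transpose).mulVec bb := by
          rw [hc, Matrix.mulVec_mulVec]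
      _ = (Q.transpose * A).mulVec bb := by rw [h1]
      _ = Q.transpose.mulVec (A.mulVec bb) := by rw [← Matrix.mulVec_mulVec]
      _ = lambar 0 • c := by rw [heig, Matrix.mulVec_smul, hc]
  have hcj : ∀ j : Fin (n+1), j ≠ 0 → c j = 0 := by
    intro j hj
    have := congrFun hDc j
    rw [Matrix.mulVec_diagonal] at this
    simp only [Pi.smul_apply, smul_eq_mul] at this
    have hlj := hnonneg j hj
    by_contra hc0
    have : lam j = lambar 0 := by
      exact mul_right_cancel₀ hc0 this
    linarith
  -- c ⬝ᵥ c = bb ⬝ᵥ bb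
  have hcc : c ⬝ᵥ c = bb ⬝ᵥ bb := by
    rw [hc, Matrix.mulVec_transpose, ← Matrix.dotProduct_mulVec,
        ← Matrix.mulVec_transpose, Matrix.mulVec_mulVec, hQ1, Matrix.one_mulVec]
  have hbbdot : bb ⬝ᵥ bb = -(lambar 0) := by
    have h00 : (Qbar.transpose * Qbar) 0 0 = (1 : ℝ) := by rw [hQbar2]; simp
    rw [Matrix.mul_apply] at h00
    have : bb ⬝ᵥ bb = (s * s) * ∑ i, Qbar.transpose 0 i * Qbar i 0 := by
      rw [dotProduct, Finset.mul_sum]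
      refine Finset.sum_congr rfl fun i _ => ?_
      simp [hbb, socb, Matrix.transpose_apply, hs]
      ring
    rw [this, h00, mul_one, hs, Real.mul_self_sqrt (by linarith)]
  have hc0sq : c 0 * c 0 = -(lambar 0) := by
    have : c ⬝ᵥ c = c 0 * c 0 := by
      rw [dotProduct, Fin.sum_univ_succ]
      have : ∀ j : Fin n, c j.succ * c j.succ = 0 := by
        intro j; rw [hcj j.succ (Fin.succ_ne_zero j)]; ring
      simp [this]
    rw [← this, hcc, hbbdot]
  have hc0ne : c 0 ≠ 0 := by
    intro h; rw [h, mul_zero] at hc0sq; linarith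
  have hlam00 : lam 0 = lambar 0 := by
    have := congrFun hDc 0
    rw [Matrix.mulVec_diagonal] at this
    simp only [Pi.smul_apply, smul_eq_mul] at this
    exact mul_right_cancel₀ hc0ne this
  -- bb = Q *ᵥ c with c supported at 0
  have hbbc : ∀ i, bb i = Q i 0 * c 0 := by
    have hQc : Q.mulVec c = bb := by
      rw [hc, Matrix.mulVec_transpose, ← Matrix.mulVec_transpose, Matrix.mulVec_mulVec, hQ1,
        Matrix.one_mulVec]
    intro i
    have := congrFun hQc i
    rw [Matrix.mulVec, dotProduct, Fin.sum_univ_succ] at this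
    have hz : ∀ j : Fin n, Q i j.succ * c j.succ = 0 := by
      intro j; rw [hcj j.succ (Fin.succ_ne_zero j)]; ring
    simp [hz] at this
    linarith [this]
  have hc0pm : c 0 = Real.sqrt (-(lam 0)) ∨ c 0 = -Real.sqrt (-(lam 0)) := by
    have h1 : Real.sqrt (-(lam 0)) * Real.sqrt (-(lam 0)) = -(lam 0) :=
      Real.mul_self_sqrt (by linarith)
    have h2 : c 0 ^ 2 = Real.sqrt (-(lam 0)) ^ 2 := by
      rw [sq, sq, h1, hc0sq, hlam00]
    exact sq_eq_sq_iff_eq_or_eq_neg.mp h2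
  rcases hc0pm with h | h
  · left; funext i
    rw [hbbc i, h]; simp [socb, mul_comm]
  · right; funext i
    rw [hbbc i, h]; simp [socb]; ring


theorem stmt_4 (n : ℕ) (A Q Qbar : Matrix (Fin (n+1)) (Fin (n+1)) ℝ)
    (lam lambar : Fin (n+1) → ℝ)
    (hQ1 : Q * Q.transpose = 1) (hQ2 : Q.transpose * Q = 1)
    (hQbar1 : Qbar * Qbar.transpose = 1) (hQbar2 : Qbar.transpose * Qbar = 1)
    (hA : A = Q * Matrix.diagonal lam * Q.transpose)
    (hAbar : A = Qbar * Matrix.diagonal lambar * Qbar.transpose)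
    (hneg : lam 0 < 0) (hnonneg : ∀ j : Fin (n+1), j ≠ 0 → 0 ≤ lam j)
    (hpos : ∃ j, 0 < lam j)
    (hnegbar : lambar 0 < 0) (hnonnegbar : ∀ j : Fin (n+1), j ≠ 0 → 0 ≤ lambar j)
    (hposbar : ∃ j, 0 < lambar j) :
    ({ {x : Fin (n+1) → ℝ | euclNorm ((socB Q lam).transpose.mulVec x) ≤ socb Q lam ⬝ᵥ x},
       {x : Fin (n+1) → ℝ | euclNorm ((socB Q lam).transpose.mulVec x) ≤ -(socb Q lam ⬝ᵥ x)} }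
      : Set (Set (Fin (n+1) → ℝ)))
    = { {x : Fin (n+1) → ℝ | euclNorm ((socB Qbar lambar).transpose.mulVec x) ≤ socb Qbar lambar ⬝ᵥ x},
        {x : Fin (n+1) → ℝ | euclNorm ((socB Qbar lambar).transpose.mulVec x) ≤ -(socb Qbar lambar ⬝ᵥ x)} } := by
  have hE : ∀ x, euclNorm ((socB Q lam).transpose.mulVec x)
      = Real.sqrt (x ⬝ᵥ A.mulVec x + (socb Q lam ⬝ᵥ x) * (socb Q lam ⬝ᵥ x)) := by
    intro x; rw [euclNorm, dot_eq n Q lam hneg hnonneg x, hA]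
  have hEbar : ∀ x, euclNorm ((socB Qbar lambar).transpose.mulVec x)
      = Real.sqrt (x ⬝ᵥ A.mulVec x + (socb Qbar lambar ⬝ᵥ x) * (socb Qbar lambar ⬝ᵥ x)) := by
    intro x; rw [euclNorm, dot_eq n Qbar lambar hnegbar hnonnegbar x, hAbar]
  rcases socb_pm n A Q Qbar lam lambar hQ1 hQ2 hQbar2 hA hAbar hneg hnonneg hnegbar with h | h
  · have hset1 : {x : Fin (n+1) → ℝ | euclNorm ((socB Q lam).transpose.mulVec x) ≤ socb Q lam ⬝ᵥ x}
        = {x : Fin (n+1) → ℝ | euclNorm ((socB Qbar lambar).transpose.mulVec x) ≤ socb Qbar lambar ⬝ᵥ x} := by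
      ext x; rw [Set.mem_setOf_eq, Set.mem_setOf_eq, hE, hEbar, h]
    have hset2 : {x : Fin (n+1) → ℝ | euclNorm ((socB Q lam).transpose.mulVec x) ≤ -(socb Q lam ⬝ᵥ x)}
        = {x : Fin (n+1) → ℝ | euclNorm ((socB Qbar lambar).transpose.mulVec x) ≤ -(socb Qbar lambar ⬝ᵥ x)} := by
      ext x; rw [Set.mem_setOf_eq, Set.mem_setOf_eq, hE, hEbar, h]
    rw [hset1, hset2]
  · have hset1 : {x : Fin (n+1) → ℝ | euclNorm ((socB Q lam).transpose.mulVec x) ≤ socb Q lam ⬝ᵥ x}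
        = {x : Fin (n+1) → ℝ | euclNorm ((socB Qbar lambar).transpose.mulVec x) ≤ -(socb Qbar lambar ⬝ᵥ x)} := by
      ext x
      rw [Set.mem_setOf_eq, Set.mem_setOf_eq, hE, hEbar, h, neg_dotProduct,
        neg_mul_neg, neg_neg]
    have hset2 : {x : Fin (n+1) → ℝ | euclNorm ((socB Q lam).transpose.mulVec x) ≤ -(socb Q lam ⬝ᵥ x)}
        = {x : Fin (n+1) → ℝ | euclNorm ((socB Qbar lambar).transpose.mulVec x) ≤ socb Qbar lambar ⬝ᵥ x} := by
      ext x
      rw [Set.mem_setOf_eq, Set.mem_setOf_eq, hE, hEbar, h, neg_dotProduct,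
        neg_mul_neg]
    rw [hset1, hset2, Set.pair_comm]
end

section
/- Let A₀ be a symmetric n×n matrix and A₁ a symmetric n×n matrix. Suppose A₀ is singular and A₁ is positive definite on Null(A₀), and suppose there exists x̄ with x̄ᵀA₀x̄ < 0 and x̄ᵀA₁x̄ < 0. Define θ := inf{ xᵀA₀x : xᵀ(A₀ − A₁)x = 1, x ∈ V }, where V is the subspace spanned by the eigenvectors of A₀ with nonnegative eigenvalues. Then θ > 0. -/
/-!
Expand `x ∈ V` in an orthonormal eigenbasis of `A₀`: its components along negative eigenvalues
vanish, so `x = u + w` with `A₀ u = 0` and `xᵀA₀x ≥ δ ‖w‖²`, where `δ` is the least positive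
eigenvalue. By compactness of the unit sphere of `Null(A₀)`, `A₁` is coercive there,
`uᵀA₁u ≥ c ‖u‖²`, and absorbing the cross terms gives `xᵀA₁x ≥ -K ‖w‖² ≥ -(K / δ) xᵀA₀x`.
Hence `1 = xᵀ(A₀ - A₁)x ≤ (1 + K / δ) xᵀA₀x`.
-/

open Matrix
open scoped RealInnerProductSpace

lemma exists_pos_le_of_pos {ι : Type*} [Finite ι] (f : ι → ℝ) :
    ∃ δ > 0, ∀ i, 0 < f i → δ ≤ f i := by
  by_cases h : {i | 0 < f i}.Nonempty
  · obtain ⟨j, hj, hmin⟩ := Set.exists_min_image _ f (Set.toFinite _) h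
    exact ⟨f j, hj, hmin⟩
  · exact ⟨1, one_pos, fun i hi => (h ⟨i, hi⟩).elim⟩

lemma exists_pos_mul_norm_sq_le {F : Type*} [NormedAddCommGroup F] [NormedSpace ℝ F]
    [FiniteDimensional ℝ F] {q : F → ℝ} (hq : Continuous q)
    (hsmul : ∀ (t : ℝ) z, q (t • z) = t ^ 2 * q z) (hpos : ∀ z ≠ 0, 0 < q z) :
    ∃ c > 0, ∀ z, c * ‖z‖ ^ 2 ≤ q z := by
  rcases subsingleton_or_nontrivial F with hF | hF
  · refine ⟨1, one_pos, fun z => ?_⟩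
    simpa [Subsingleton.elim z 0] using (hsmul 0 0).ge
  obtain ⟨z₀, hz₀, hmin⟩ := (isCompact_sphere (0 : F) 1).exists_isMinOn
    (NormedSpace.sphere_nonempty.2 zero_le_one) hq.continuousOn
  have hz₀ne : z₀ ≠ 0 := ne_zero_of_mem_unit_sphere ⟨z₀, hz₀⟩
  refine ⟨q z₀, hpos z₀ hz₀ne, fun z => ?_⟩
  rcases eq_or_ne z 0 with rfl | hz
  · simpa using (hsmul 0 0).ge
  have hnz : 0 < ‖z‖ := norm_pos_iff.2 hz
  have hunit : ‖z‖⁻¹ • z ∈ Metric.sphere (0 : F) 1 := by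
    simp [norm_smul, hnz.ne']
  calc q z₀ * ‖z‖ ^ 2 ≤ q (‖z‖⁻¹ • z) * ‖z‖ ^ 2 := by gcongr; exact hmin hunit
    _ = q z := by rw [hsmul, inv_pow]; field_simp

section

variable {E : Type*} [NormedAddCommGroup E] [InnerProductSpace ℝ E]

lemma neg_mul_norm_sq_le_inner_add (T : E →L[ℝ] E) {c : ℝ} (hc : 0 < c) {u : E}
    (hu : c * ‖u‖ ^ 2 ≤ ⟪u, T u⟫) (w : E) :
    -((‖T‖ ^ 2 / c + ‖T‖) * ‖w‖ ^ 2) ≤ ⟪u + w, T (u + w)⟫ := by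
  have hbound : ∀ a b, -(‖T‖ * ‖a‖ * ‖b‖) ≤ ⟪a, T b⟫ := fun a b => by
    have := (abs_real_inner_le_norm a (T b)).trans
      (mul_le_mul_of_nonneg_left (T.le_opNorm b) (norm_nonneg a))
    linarith [neg_abs_le ⟪a, T b⟫]
  have huw := hbound u w
  have hwu := hbound w u
  have hww := hbound w w
  have hAMGM : 2 * ‖T‖ * ‖u‖ * ‖w‖ ≤ c * ‖u‖ ^ 2 + ‖T‖ ^ 2 / c * ‖w‖ ^ 2 := by
    have := sq_nonneg (c * ‖u‖ - ‖T‖ * ‖w‖)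
    have h : c * (‖T‖ ^ 2 / c * ‖w‖ ^ 2) = ‖T‖ ^ 2 * ‖w‖ ^ 2 := by field_simp
    nlinarith
  simp only [map_add, inner_add_left, inner_add_right]
  nlinarith

def nonnegEigenSpan (T : E →ₗ[ℝ] E) : Submodule ℝ E :=
  Submodule.span ℝ {v | ∃ μ : ℝ, 0 ≤ μ ∧ T v = μ • v}

lemma LinearMap.IsSymmetric.inner_eq_zero_of_mem_nonnegEigenSpan {T : E →ₗ[ℝ] E}
    (hT : T.IsSymmetric) {v : E} {ν : ℝ} (hv : T v = ν • v) (hν : ν < 0) {x : E}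
    (hx : x ∈ nonnegEigenSpan T) : ⟪v, x⟫ = 0 := by
  refine (Submodule.span_le (p := LinearMap.ker (innerₛₗ ℝ v))).2 ?_ hx
  rintro y ⟨μ, hμ, hy⟩
  have h : μ * ⟪v, y⟫ = ν * ⟪v, y⟫ := by
    rw [← inner_smul_right, ← hy, ← hT, hv, real_inner_smul_left]
  have : (μ - ν) * ⟪v, y⟫ = 0 := by rw [sub_mul, h, sub_self]
  exact (mul_eq_zero.1 this).resolve_left (by linarith)

lemma LinearMap.IsSymmetric.exists_eq_ker_add_of_mem_nonnegEigenSpan {T : E →ₗ[ℝ] E}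
    (hT : T.IsSymmetric) {ι : Type*} [Fintype ι] (b : OrthonormalBasis ι ℝ E) (ev : ι → ℝ)
    (hb : ∀ i, T (b i) = ev i • b i) :
    ∃ δ > 0, ∀ x ∈ nonnegEigenSpan T,
      ∃ u w, x = u + w ∧ T u = 0 ∧ δ * ‖w‖ ^ 2 ≤ ⟪x, T x⟫ := by
  have hrepr : ∀ v i, b.repr (T v) i = ev i * b.repr v i := fun v i => by
    rw [b.repr_apply_apply, b.repr_apply_apply, ← hT, hb, real_inner_smul_left]
  obtain ⟨δ, hδ, hδle⟩ := exists_pos_le_of_pos ev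
  refine ⟨δ, hδ, fun x hx => ?_⟩
  set y := b.repr x
  set w := b.repr.symm (WithLp.toLp 2 fun i => if ev i = 0 then 0 else y i)
  have hrepr_w : ∀ i, b.repr w i = if ev i = 0 then 0 else y i := by simp [w]
  refine ⟨x - w, w, (sub_add_cancel x w).symm, ?_, ?_⟩
  · apply b.repr.injective
    ext i
    rw [hrepr, map_sub, map_zero, PiLp.sub_apply, PiLp.zero_apply, hrepr_w]
    split_ifs with h
    · rw [h, zero_mul]
    · rw [sub_self, mul_zero]
  · have hw : ‖w‖ ^ 2 = ∑ i, (if ev i = 0 then 0 else y i) ^ 2 := by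
      simp [w, EuclideanSpace.norm_sq_eq]
    have hq : ⟪x, T x⟫ = ∑ i, ev i * y i ^ 2 := by
      rw [← b.repr.inner_map_map, PiLp.inner_apply]
      refine Finset.sum_congr rfl fun i _ => ?_
      rw [hrepr, Real.inner_apply]
      ring
    rw [hw, hq, Finset.mul_sum]
    refine Finset.sum_le_sum fun i _ => ?_
    rcases lt_trichotomy (ev i) 0 with h | h | h
    · have : y i = 0 := by
        rw [b.repr_apply_apply]
        exact hT.inner_eq_zero_of_mem_nonnegEigenSpan (hb i) h hx
      simp [this]
    · simp [h]
    · simp only [h.ne', if_false]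
      exact mul_le_mul_of_nonneg_right (hδle i h) (sq_nonneg _)

variable [FiniteDimensional ℝ E]

lemma exists_pos_mul_norm_sq_le_inner_of_pos (T : E →ₗ[ℝ] E) (N : Submodule ℝ E)
    (hpos : ∀ z ∈ N, z ≠ 0 → 0 < ⟪z, T z⟫) :
    ∃ c > 0, ∀ z ∈ N, c * ‖z‖ ^ 2 ≤ ⟪z, T z⟫ := by
  obtain ⟨c, hc, hcoer⟩ := exists_pos_mul_norm_sq_le (F := N) (q := fun z => ⟪(z : E), T z⟫)
    (by fun_prop) (fun t z => by
      simp only [SetLike.val_smul, map_smul, inner_smul_right, inner_smul_left, Real.ringHom_apply]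
      ring)
    (fun z hz => hpos z z.2 (by simpa using hz))
  exact ⟨c, hc, fun z hz => hcoer ⟨z, hz⟩⟩

theorem LinearMap.IsSymmetric.exists_pos_le_inner_of_mem_nonnegEigenSpan {T₀ T₁ : E →ₗ[ℝ] E}
    (hT₀ : T₀.IsSymmetric) (hpd : ∀ z, T₀ z = 0 → z ≠ 0 → 0 < ⟪z, T₁ z⟫) :
    ∃ θ > 0, ∀ x ∈ nonnegEigenSpan T₀, ⟪x, (T₀ - T₁) x⟫ = 1 → θ ≤ ⟪x, T₀ x⟫ := by
  obtain ⟨c, hc, hcoer⟩ := exists_pos_mul_norm_sq_le_inner_of_pos T₁ (LinearMap.ker T₀) hpd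
  obtain ⟨δ, hδ, hsplit⟩ := hT₀.exists_eq_ker_add_of_mem_nonnegEigenSpan
    (hT₀.eigenvectorBasis rfl) _ (hT₀.apply_eigenvectorBasis rfl)
  set S := LinearMap.toContinuousLinearMap T₁
  set K := ‖S‖ ^ 2 / c + ‖S‖
  refine ⟨(1 + K / δ)⁻¹, by positivity, fun x hx hx1 => ?_⟩
  obtain ⟨u, w, rfl, hu, hw⟩ := hsplit x hx
  have hT₁ : -(K * ‖w‖ ^ 2) ≤ ⟪u + w, T₁ (u + w)⟫ :=
    neg_mul_norm_sq_le_inner_add S hc (hcoer u hu) w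
  rw [LinearMap.sub_apply, inner_sub_right] at hx1
  have hKw : K * ‖w‖ ^ 2 ≤ K / δ * ⟪u + w, T₀ (u + w)⟫ := by
    rw [div_mul_eq_mul_div, le_div_iff₀ hδ, mul_assoc, mul_comm _ δ]
    exact mul_le_mul_of_nonneg_left hw (by positivity)
  rw [inv_le_iff_one_le_mul₀' (by positivity)]
  linarith

end

lemma Matrix.inner_toEuclideanLin {m : Type*} [Fintype m] [DecidableEq m]
    (A : Matrix m m ℝ) (x y : EuclideanSpace ℝ m) :
    ⟪x, toEuclideanLin A y⟫ = WithLp.ofLp x ⬝ᵥ A *ᵥ WithLp.ofLp y := by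
  rw [EuclideanSpace.inner_eq_star_dotProduct, star_trivial, dotProduct_comm]
  rfl

lemma Matrix.toLp_mem_nonnegEigenSpan {m : Type*} [Fintype m] [DecidableEq m]
    {A : Matrix m m ℝ} {x : m → ℝ}
    (hx : x ∈ Submodule.span ℝ {v : m → ℝ | ∃ μ : ℝ, 0 ≤ μ ∧ A *ᵥ v = μ • v}) :
    WithLp.toLp 2 x ∈ nonnegEigenSpan (toEuclideanLin A) := by
  have := Submodule.mem_map_of_mem (f := (WithLp.linearEquiv 2 ℝ (m → ℝ)).symm.toLinearMap) hx
  rw [Submodule.map_span] at this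
  refine Submodule.span_mono ?_ this
  rintro _ ⟨v, ⟨μ, hμ, hv⟩, rfl⟩
  exact ⟨μ, hμ, by simp [hv]⟩

theorem stmt_6_general (n : ℕ) (A0 A1 : Matrix (Fin n) (Fin n) ℝ)
    (hA0 : A0.IsSymm)
    (hpd : ∀ z : Fin n → ℝ, A0.mulVec z = 0 → z ≠ 0 → 0 < z ⬝ᵥ A1.mulVec z) :
    ∃ θ : ℝ, 0 < θ ∧
      ∀ x ∈ Submodule.span ℝ {v : Fin n → ℝ | ∃ μ : ℝ, 0 ≤ μ ∧ A0.mulVec v = μ • v},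
        x ⬝ᵥ (A0 - A1).mulVec x = 1 → θ ≤ x ⬝ᵥ A0.mulVec x := by
  have hT₀ : (toEuclideanLin A0).IsSymmetric :=
    isSymmetric_toEuclideanLin_iff.2 (isHermitian_iff_isSymm.2 hA0)
  obtain ⟨θ, hθ, hbound⟩ :=
    hT₀.exists_pos_le_inner_of_mem_nonnegEigenSpan (T₁ := toEuclideanLin A1) fun z hz hz₀ => by
      rw [inner_toEuclideanLin]
      exact hpd _ (congrArg WithLp.ofLp hz) (by simpa using hz₀)
  refine ⟨θ, hθ, fun x hx hx1 => ?_⟩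
  have h := hbound (WithLp.toLp 2 x) (toLp_mem_nonnegEigenSpan hx)
    (by rwa [← map_sub, inner_toEuclideanLin])
  rwa [inner_toEuclideanLin] at h

theorem stmt_6 (n : ℕ) (A0 A1 : Matrix (Fin n) (Fin n) ℝ)
    (hA0 : A0.IsSymm) (hA1 : A1.IsSymm)
    (hsing : A0.det = 0)
    (hpd : ∀ z : Fin n → ℝ, A0.mulVec z = 0 → z ≠ 0 → 0 < z ⬝ᵥ A1.mulVec z)
    (xbar : Fin n → ℝ)
    (h0 : xbar ⬝ᵥ A0.mulVec xbar < 0) (h1 : xbar ⬝ᵥ A1.mulVec xbar < 0) :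
    ∃ θ : ℝ, 0 < θ ∧
      ∀ x ∈ Submodule.span ℝ {v : Fin n → ℝ | ∃ μ : ℝ, 0 ≤ μ ∧ A0.mulVec v = μ • v},
        x ⬝ᵥ (A0 - A1).mulVec x = 1 → θ ≤ x ⬝ᵥ A0.mulVec x :=
  stmt_6_general n A0 A1 hA0 hpd
end

section
/- Let A₀, A₁ be symmetric n×n matrices such that A₀ has at least one positive eigenvalue and exactly one negative eigenvalue, there exists x̄ with x̄ᵀA₀x̄ < 0 and x̄ᵀA₁x̄ < 0, A₀ is singular, and A₁ is positive definite on Null(A₀). Then for all sufficiently small ε > 0, the matrix A_ε := (1−ε)A₀ + εA₁ is invertible with exactly one negative eigenvalue. -/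
/-!
On the span `W` of the eigenvectors of `A₀` with nonnegative eigenvalue, a subspace of codimension
one, the form `z ↦ zᵀA₀z` is positive semidefinite and vanishes only on `Null(A₀)`, where `A₁` is
positive. By compactness of the unit sphere of `W`, the form of `A_ε` is positive definite on `W`
for small `ε > 0`, so `A_ε` has at most one nonpositive eigenvalue; since `x̄ᵀA_εx̄ < 0` it has one,
which is negative, and `A_ε` is invertible.
-/

open Matrix

theorem IsCompact.exists_forall_convexCombination_pos {X : Type*} [TopologicalSpace X]
    {K : Set X} (hK : IsCompact K) {f g : X → ℝ} (hf : Continuous f) (hg : Continuous g)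
    (hf_nonneg : ∀ x ∈ K, 0 ≤ f x) (hg_pos : ∀ x ∈ K, f x = 0 → 0 < g x) :
    ∃ ε₀ : ℝ, 0 < ε₀ ∧ ∀ ε : ℝ, 0 < ε → ε < ε₀ → ∀ x ∈ K, 0 < (1 - ε) * f x + ε * g x := by
  obtain ⟨c, hc, hcf⟩ : ∃ c, 0 < c ∧ ∀ x ∈ K ∩ {x | g x ≤ 0}, c ≤ f x := by
    refine (hK.inter_right (isClosed_le hg continuous_const)).exists_forall_le'
      hf.continuousOn fun x ⟨hxK, hgx⟩ => ?_
    refine (hf_nonneg x hxK).lt_of_ne fun hfx => ?_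
    exact (hg_pos x hxK hfx.symm).not_ge hgx
  obtain ⟨m, hm⟩ := hK.bddBelow_image hg.continuousOn
  set m' := min m 0
  have hm' : ∀ x ∈ K, m' ≤ g x := fun x hx => (min_le_left _ _).trans (hm ⟨x, hx, rfl⟩)
  have hcm : 0 < c - m' := by linarith [min_le_right m 0]
  refine ⟨c / (c - m'), div_pos hc hcm, fun ε hε hεlt x hx => ?_⟩
  have hε : ε * (c - m') < c := (lt_div_iff₀ hcm).mp hεlt
  have hε1 : ε < 1 := by nlinarith [min_le_right m 0]
  rcases lt_or_ge 0 (g x) with hgx | hgx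
  · nlinarith [hf_nonneg x hx]
  · nlinarith [hcf x ⟨hx, hgx⟩, hm' x hx]

namespace Matrix

variable {n : Type*} [Fintype n]

theorem smul_dotProduct_mulVec_smul (A : Matrix n n ℝ) (c : ℝ) (z : n → ℝ) :
    (c • z) ⬝ᵥ A *ᵥ (c • z) = c ^ 2 * (z ⬝ᵥ A *ᵥ z) := by
  simp only [mulVec_smul, smul_dotProduct, dotProduct_smul, smul_eq_mul]
  ring

theorem dotProduct_smul_add_smul_mulVec (A₀ A₁ : Matrix n n ℝ) (a b : ℝ) (z : n → ℝ) :
    z ⬝ᵥ (a • A₀ + b • A₁) *ᵥ z = a * (z ⬝ᵥ A₀ *ᵥ z) + b * (z ⬝ᵥ A₁ *ᵥ z) := by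
  simp only [add_mulVec, smul_mulVec, dotProduct_add, dotProduct_smul, smul_eq_mul]

theorem exists_forall_convexCombination_dotProduct_mulVec_pos (W : Submodule ℝ (n → ℝ))
    (A₀ A₁ : Matrix n n ℝ) (h₀ : ∀ z ∈ W, 0 ≤ z ⬝ᵥ A₀ *ᵥ z)
    (h₁ : ∀ z ∈ W, z ≠ 0 → z ⬝ᵥ A₀ *ᵥ z = 0 → 0 < z ⬝ᵥ A₁ *ᵥ z) :
    ∃ ε₀ : ℝ, 0 < ε₀ ∧ ∀ ε : ℝ, 0 < ε → ε < ε₀ →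
      ∀ z ∈ W, z ≠ 0 → 0 < z ⬝ᵥ ((1 - ε) • A₀ + ε • A₁) *ᵥ z := by
  have hK : IsCompact ((W : Set (n → ℝ)) ∩ Metric.sphere 0 1) :=
    (isCompact_sphere 0 1).inter_left W.closed_of_finiteDimensional
  obtain ⟨ε₀, hε₀, hpos⟩ := hK.exists_forall_convexCombination_pos (by fun_prop) (by fun_prop)
    (fun z hz => h₀ z hz.1) fun z hz => h₁ z hz.1 (ne_zero_of_mem_unit_sphere ⟨z, hz.2⟩)
  refine ⟨ε₀, hε₀, fun ε hε hεlt z hzW hz => ?_⟩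
  have hnorm : 0 < ‖z‖ := norm_pos_iff.mpr hz
  have hu : ‖z‖⁻¹ • z ∈ (W : Set (n → ℝ)) ∩ Metric.sphere 0 1 :=
    ⟨W.smul_mem _ hzW, by simp [norm_smul, hnorm.ne']⟩
  have := hpos ε hε hεlt _ hu
  rw [← dotProduct_smul_add_smul_mulVec, smul_dotProduct_mulVec_smul] at this
  exact pos_of_mul_pos_right this (by positivity)

namespace IsHermitian

variable [DecidableEq n] {A : Matrix n n ℝ} (hA : A.IsHermitian)

theorem sum_dotProduct_smul_eigenvectorBasis (z : n → ℝ) :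
    ∑ i, (⇑(hA.eigenvectorBasis i) ⬝ᵥ z) • ⇑(hA.eigenvectorBasis i) = z := by
  simpa [EuclideanSpace.inner_eq_star_dotProduct, dotProduct_comm] using
    congrArg WithLp.ofLp (hA.eigenvectorBasis.sum_repr' (WithLp.toLp 2 z))

theorem mulVec_eq_sum (z : n → ℝ) :
    A *ᵥ z =
      ∑ i, (hA.eigenvalues i * (⇑(hA.eigenvectorBasis i) ⬝ᵥ z)) • ⇑(hA.eigenvectorBasis i) := by
  conv_lhs => rw [← hA.sum_dotProduct_smul_eigenvectorBasis z]
  simp only [mulVec_sum, mulVec_smul, hA.mulVec_eigenvectorBasis, smul_smul, mul_comm]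

theorem dotProduct_mulVec_eq_sum (z : n → ℝ) :
    z ⬝ᵥ A *ᵥ z = ∑ i, hA.eigenvalues i * (⇑(hA.eigenvectorBasis i) ⬝ᵥ z) ^ 2 := by
  rw [hA.mulVec_eq_sum z, dotProduct_sum]
  refine Finset.sum_congr rfl fun i _ => ?_
  rw [dotProduct_smul, smul_eq_mul, dotProduct_comm z]
  ring

theorem exists_eigenvalues_neg {x : n → ℝ} (hx : x ⬝ᵥ A *ᵥ x < 0) :
    ∃ i, hA.eigenvalues i < 0 := by
  by_contra! h
  rw [hA.dotProduct_mulVec_eq_sum] at hx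
  exact hx.not_ge (Finset.sum_nonneg fun i _ => mul_nonneg (h i) (sq_nonneg _))

def eigenvectorSpan (s : Finset n) : Submodule ℝ (n → ℝ) :=
  Submodule.span ℝ (Set.range fun i : s => ⇑(hA.eigenvectorBasis i))

theorem finrank_eigenvectorSpan (s : Finset n) :
    Module.finrank ℝ (hA.eigenvectorSpan s) = s.card := by
  have hli : LinearIndependent ℝ fun i => ⇑(hA.eigenvectorBasis i) :=
    (hA.eigenvectorBasis.toBasis.map (WithLp.linearEquiv 2 ℝ (n → ℝ))).linearIndependent
  exact (finrank_span_eq_card (hli.comp _ Subtype.val_injective)).trans (Fintype.card_coe s)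

theorem eigenvectorBasis_dotProduct (i j : n) :
    ⇑(hA.eigenvectorBasis i) ⬝ᵥ ⇑(hA.eigenvectorBasis j) = if i = j then 1 else 0 := by
  simpa [EuclideanSpace.inner_eq_star_dotProduct, eq_comm] using
    orthonormal_iff_ite.mp hA.eigenvectorBasis.orthonormal j i

theorem eigenvectorBasis_dotProduct_eq_zero {s : Finset n} {z : n → ℝ}
    (hz : z ∈ hA.eigenvectorSpan s) {i : n} (hi : i ∉ s) :
    ⇑(hA.eigenvectorBasis i) ⬝ᵥ z = 0 := by
  induction hz using Submodule.span_induction with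
  | mem _ hx =>
    obtain ⟨j, rfl⟩ := hx
    rw [hA.eigenvectorBasis_dotProduct, if_neg (ne_of_mem_of_not_mem j.2 hi).symm]
  | zero => exact dotProduct_zero _
  | add _ _ _ _ hx hy => rw [dotProduct_add, hx, hy, add_zero]
  | smul _ _ _ hx => rw [dotProduct_smul, hx, smul_zero]

theorem dotProduct_mulVec_nonpos_of_mem {z : n → ℝ}
    (hz : z ∈ hA.eigenvectorSpan (Finset.univ.filter fun i => hA.eigenvalues i ≤ 0)) :
    z ⬝ᵥ A *ᵥ z ≤ 0 := by
  rw [hA.dotProduct_mulVec_eq_sum]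
  refine Finset.sum_nonpos fun i _ => ?_
  by_cases hi : hA.eigenvalues i ≤ 0
  · exact mul_nonpos_of_nonpos_of_nonneg hi (sq_nonneg _)
  · rw [hA.eigenvectorBasis_dotProduct_eq_zero hz (by simpa using hi)]
    simp

theorem eigenvalues_mul_sq_nonneg_of_mem {z : n → ℝ}
    (hz : z ∈ hA.eigenvectorSpan (Finset.univ.filter fun i => 0 ≤ hA.eigenvalues i)) (i : n) :
    0 ≤ hA.eigenvalues i * (⇑(hA.eigenvectorBasis i) ⬝ᵥ z) ^ 2 := by
  by_cases hi : 0 ≤ hA.eigenvalues i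
  · exact mul_nonneg hi (sq_nonneg _)
  · rw [hA.eigenvectorBasis_dotProduct_eq_zero hz (by simpa using hi)]
    simp

theorem dotProduct_mulVec_nonneg_of_mem {z : n → ℝ}
    (hz : z ∈ hA.eigenvectorSpan (Finset.univ.filter fun i => 0 ≤ hA.eigenvalues i)) :
    0 ≤ z ⬝ᵥ A *ᵥ z := by
  rw [hA.dotProduct_mulVec_eq_sum]
  exact Finset.sum_nonneg fun i _ => hA.eigenvalues_mul_sq_nonneg_of_mem hz i

theorem mulVec_eq_zero_of_mem {z : n → ℝ}
    (hz : z ∈ hA.eigenvectorSpan (Finset.univ.filter fun i => 0 ≤ hA.eigenvalues i))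
    (hzz : z ⬝ᵥ A *ᵥ z = 0) : A *ᵥ z = 0 := by
  rw [hA.dotProduct_mulVec_eq_sum, Finset.sum_eq_zero_iff_of_nonneg fun i _ =>
    hA.eigenvalues_mul_sq_nonneg_of_mem hz i] at hzz
  rw [hA.mulVec_eq_sum]
  refine Finset.sum_eq_zero fun i hi => ?_
  have hi := hzz i hi
  rw [sq, ← mul_assoc, mul_eq_zero] at hi
  rcases hi with hi | hi <;> simp [hi]

theorem card_nonpos_eigenvalues_add_finrank_le (W : Submodule ℝ (n → ℝ))
    (hW : ∀ z ∈ W, z ≠ 0 → 0 < z ⬝ᵥ A *ᵥ z) :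
    (Finset.univ.filter fun i => hA.eigenvalues i ≤ 0).card + Module.finrank ℝ W ≤
      Fintype.card n := by
  rw [← hA.finrank_eigenvectorSpan, ← Module.finrank_fintype_fun_eq_card (R := ℝ)]
  refine Submodule.finrank_add_finrank_le_of_disjoint
    (Submodule.disjoint_def.mpr fun z hzU hzW => ?_)
  by_contra hz
  exact (hW z hzW hz).not_ge (hA.dotProduct_mulVec_nonpos_of_mem hzU)

theorem isUnit_det_and_card_neg_eigenvalues_eq_one
    (hle : (Finset.univ.filter fun i => hA.eigenvalues i ≤ 0).card ≤ 1)
    {x : n → ℝ} (hx : x ⬝ᵥ A *ᵥ x < 0) :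
    IsUnit A.det ∧ (Finset.univ.filter fun i => hA.eigenvalues i < 0).card = 1 := by
  obtain ⟨i₀, hi₀⟩ := hA.exists_eigenvalues_neg hx
  have hsub : (Finset.univ.filter fun i => hA.eigenvalues i < 0) ⊆
      Finset.univ.filter fun i => hA.eigenvalues i ≤ 0 :=
    Finset.monotone_filter_right _ fun _ _ => le_of_lt
  have hpos : 0 < (Finset.univ.filter fun i => hA.eigenvalues i < 0).card :=
    Finset.card_pos.mpr ⟨i₀, by simpa using hi₀⟩
  have hcard := Finset.card_le_card hsub
  have heq := Finset.eq_of_subset_of_card_le hsub (by omega)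
  refine ⟨?_, by omega⟩
  rw [hA.det_eq_prod_eigenvalues, isUnit_iff_ne_zero, Finset.prod_ne_zero_iff]
  intro i _ hi
  rw [RCLike.ofReal_real_eq_id, id] at hi
  have hmem : i ∈ Finset.univ.filter fun i => hA.eigenvalues i < 0 := heq ▸ by simp [hi]
  exact (Finset.mem_filter.mp hmem).2.ne hi

end IsHermitian

end Matrix

theorem stmt_7_general (n : ℕ) (A0 A1 : Matrix (Fin n) (Fin n) ℝ)
    (hA0 : A0.IsHermitian) (hA1 : A1.IsHermitian)
    (hA0neg : (Finset.univ.filter fun i => hA0.eigenvalues i < 0).card = 1)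
    (xbar : Fin n → ℝ)
    (h0 : xbar ⬝ᵥ A0.mulVec xbar < 0) (h1 : xbar ⬝ᵥ A1.mulVec xbar < 0)
    (hpd : ∀ z : Fin n → ℝ, A0.mulVec z = 0 → z ≠ 0 → 0 < z ⬝ᵥ A1.mulVec z) :
    ∃ ε0 : ℝ, 0 < ε0 ∧ ∀ ε : ℝ, 0 < ε → ε < ε0 →
      IsUnit ((1 - ε) • A0 + ε • A1).det ∧
      ∀ h : ((1 - ε) • A0 + ε • A1).IsHermitian,
        (Finset.univ.filter fun i => h.eigenvalues i < 0).card = 1 := by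
  set W := hA0.eigenvectorSpan (Finset.univ.filter fun i => 0 ≤ hA0.eigenvalues i)
  have hW : Module.finrank ℝ W + 1 = n := by
    rw [hA0.finrank_eigenvectorSpan, ← hA0neg]
    simpa using Finset.card_filter_add_card_filter_not (s := Finset.univ)
      (fun i => 0 ≤ hA0.eigenvalues i)
  obtain ⟨ε₀, hε₀, hpos⟩ := exists_forall_convexCombination_dotProduct_mulVec_pos W A0 A1
    (fun z hz => hA0.dotProduct_mulVec_nonneg_of_mem hz)
    (fun z hz hz0 hzz => hpd z (hA0.mulVec_eq_zero_of_mem hz hzz) hz0)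
  refine ⟨min ε₀ 1, lt_min hε₀ one_pos, fun ε hε hεlt => ?_⟩
  have hB : ((1 - ε) • A0 + ε • A1).IsHermitian :=
    (hA0.smul (IsSelfAdjoint.all _)).add (hA1.smul (IsSelfAdjoint.all _))
  have hle := hB.card_nonpos_eigenvalues_add_finrank_le W
    (hpos ε hε (hεlt.trans_le (min_le_left _ _)))
  have hx : xbar ⬝ᵥ ((1 - ε) • A0 + ε • A1) *ᵥ xbar < 0 := by
    rw [dotProduct_smul_add_smul_mulVec]
    nlinarith [min_le_right ε₀ 1]
  have := hB.isUnit_det_and_card_neg_eigenvalues_eq_one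
    (by rw [Fintype.card_fin] at hle; omega) hx
  exact ⟨this.1, fun _ => this.2⟩

theorem stmt_7 (n : ℕ) (A0 A1 : Matrix (Fin n) (Fin n) ℝ)
    (hA0 : A0.IsHermitian) (hA1 : A1.IsHermitian)
    (hA0pos : 0 < (Finset.univ.filter fun i => 0 < hA0.eigenvalues i).card)
    (hA0neg : (Finset.univ.filter fun i => hA0.eigenvalues i < 0).card = 1)
    (xbar : Fin n → ℝ)
    (h0 : xbar ⬝ᵥ A0.mulVec xbar < 0) (h1 : xbar ⬝ᵥ A1.mulVec xbar < 0)
    (hsing : A0.det = 0)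
    (hpd : ∀ z : Fin n → ℝ, A0.mulVec z = 0 → z ≠ 0 → 0 < z ⬝ᵥ A1.mulVec z) :
    ∃ ε0 : ℝ, 0 < ε0 ∧ ∀ ε : ℝ, 0 < ε → ε < ε0 →
      IsUnit ((1 - ε) • A0 + ε • A1).det ∧
      ∀ h : ((1 - ε) • A0 + ε • A1).IsHermitian,
        (Finset.univ.filter fun i => h.eigenvalues i < 0).card = 1 :=
  stmt_7_general n A0 A1 hA0 hA1 hA0neg xbar h0 h1 hpd
end

section
/- Let S ⊆ ℝⁿ be any set and rec(S) its recession cone. Then conv.hull(S) + conic.hull(rec(S)) = conv.hull(S), where conic.hull denotes the set of finite nonnegative combinations and conv.hull the set of finite convex combinations. -/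
open Pointwise
/-- The conic hull: the set of finite nonnegative combinations of elements of `T`. -/
def conicHull {n : ℕ} (T : Set (Fin n → ℝ)) : Set (Fin n → ℝ) :=
  {x | ∃ (k : ℕ) (c : Fin k → ℝ) (v : Fin k → (Fin n → ℝ)),
    (∀ i, 0 ≤ c i) ∧ (∀ i, v i ∈ T) ∧ x = ∑ i, c i • v i}

theorem stmt_9 (n : ℕ) (S : Set (Fin n → ℝ)) :
    convexHull ℝ S + conicHull {d | ∀ x ∈ S, ∀ l : ℝ, 0 ≤ l → x + l • d ∈ S}
      = convexHull ℝ S := by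
  set R := {d : Fin n → ℝ | ∀ x ∈ S, ∀ l : ℝ, 0 ≤ l → x + l • d ∈ S} with hR
  have key : ∀ d ∈ R, ∀ l : ℝ, 0 ≤ l → ∀ x ∈ convexHull ℝ S,
      x + l • d ∈ convexHull ℝ S := by
    intro d hd l hl x hx
    have hsub : S ⊆ (fun z => z + l • d) ⁻¹' (convexHull ℝ S) := by
      intro y hy
      exact subset_convexHull ℝ S (hd y hy l hl)
    have hconv : Convex ℝ ((fun z : Fin n → ℝ => z + l • d) ⁻¹' (convexHull ℝ S)) := by
      intro a ha b hb p q hp hq hpq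
      simp only [Set.mem_preimage] at ha hb ⊢
      have h3 : (p • a + q • b) + l • d = p • (a + l • d) + q • (b + l • d) := by
        have hq1 : q = 1 - p := by linarith
        subst hq1
        module
      rw [h3]
      exact (convex_convexHull ℝ S) ha hb hp hq hpq
    exact convexHull_min hsub hconv hx
  apply Set.Subset.antisymm
  · rintro z ⟨x, hx, y, ⟨k, c, v, hc, hv, rfl⟩, rfl⟩
    clear hR
    induction k with
    | zero => simpa using hx
    | succ m ih =>
      have h1 : x + ∑ i : Fin m, c i.succ • v i.succ ∈ convexHull ℝ S :=
        ih (fun i => c i.succ) (fun i => v i.succ) (fun i => hc i.succ) (fun i => hv i.succ)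
      have h2 := key (v 0) (hv 0) (c 0) (hc 0) _ h1
      have : x + ∑ i : Fin (m + 1), c i • v i
          = (x + ∑ i : Fin m, c i.succ • v i.succ) + c 0 • v 0 := by
        rw [Fin.sum_univ_succ]; abel
      show x + ∑ i : Fin (m + 1), c i • v i ∈ convexHull ℝ S
      rw [this]
      exact h2
  · intro x hx
    refine ⟨x, hx, 0, ⟨0, Fin.elim0, Fin.elim0, fun i => i.elim0, fun i => i.elim0, by simp⟩,
      by simp⟩
end

section
/- Let G₀, G₁, G_s ⊆ ℝⁿ be cones with G₀ and G_s convex, satisfying G₀ ∩ G₁ ⊆ G₀ ∩ G_s ⊆ conic.hull(G₀ ∩ G₁) and G₀ ∩ G_s ∩ H⁰ ⊆ G₁, where H⁰ = {x : hᵀx = 0} for some h ∈ ℝⁿ. Then G₀ ∩ G₁ ∩ H⁺ ⊆ G₀ ∩ G_s ∩ H⁺ ⊆ conic.hull(G₀ ∩ G₁ ∩ H⁺), where H⁺ = {x : hᵀx ≥ 0}. -/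
open Matrix

/-!
On `H⁰` nothing is to be done. If `hᵀx > 0`, write `x = ∑ cᵢ vᵢ` with `vᵢ ∈ G₀ ∩ G₁` and push each
`vᵢ` with `hᵀvᵢ < 0` along `x` onto the hyperplane: `uᵢ = vᵢ + tᵢ x` lies in the convex cone
`G₀ ∩ G_s` and on `H⁰`, hence in `G₁`. Then `∑ cᵢ uᵢ = (1 + ∑ cᵢ tᵢ) x`, so `x` is a nonnegative
combination of the `uᵢ ∈ G₀ ∩ G₁ ∩ H⁺`.
-/

theorem Convex.add_mem_of_smul_mem {𝕜 E : Type*} [Field 𝕜] [LinearOrder 𝕜] [IsStrictOrderedRing 𝕜]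
    [AddCommGroup E] [Module 𝕜 E] {S : Set E} (hconv : Convex 𝕜 S)
    (hcone : ∀ c : 𝕜, 0 ≤ c → ∀ x ∈ S, c • x ∈ S) {a b : E} (ha : a ∈ S) (hb : b ∈ S) :
    a + b ∈ S := by
  have hhalf : (0 : 𝕜) ≤ 1 / 2 := by norm_num
  have hmid := hconv ha hb hhalf hhalf (add_halves 1)
  convert hcone 2 zero_le_two _ hmid using 1
  module

theorem exists_nonneg_add_smul_mem_of_pos {E : Type*} [AddCommGroup E] [Module ℝ E]
    {G0 G1 Gs : Set E} (f : E →ₗ[ℝ] ℝ)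
    (hG0cone : ∀ c : ℝ, 0 ≤ c → ∀ x ∈ G0, c • x ∈ G0)
    (hGscone : ∀ c : ℝ, 0 ≤ c → ∀ x ∈ Gs, c • x ∈ Gs)
    (hG0conv : Convex ℝ G0) (hGsconv : Convex ℝ Gs)
    (hH0 : G0 ∩ Gs ∩ {x | f x = 0} ⊆ G1) {x v : E} (hx0 : x ∈ G0) (hxs : x ∈ Gs)
    (hfx : 0 < f x) (hv : v ∈ G0 ∩ G1) (hvs : v ∈ Gs) :
    ∃ t : ℝ, 0 ≤ t ∧ v + t • x ∈ G0 ∩ G1 ∩ {y | 0 ≤ f y} := by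
  rcases le_or_gt 0 (f v) with hfv | hfv
  · exact ⟨0, le_rfl, by simpa using ⟨hv, hfv⟩⟩
  set t := -f v / f x
  have ht : 0 ≤ t := div_nonneg (by linarith) hfx.le
  have hu0 : v + t • x ∈ G0 := hG0conv.add_mem_of_smul_mem hG0cone hv.1 (hG0cone t ht x hx0)
  have hus : v + t • x ∈ Gs := hGsconv.add_mem_of_smul_mem hGscone hvs (hGscone t ht x hxs)
  have hfu : f (v + t • x) = 0 := by
    simp only [map_add, map_smul, smul_eq_mul, t]
    field_simp
    ring
  exact ⟨t, ht, ⟨hu0, hH0 ⟨⟨hu0, hus⟩, hfu⟩⟩, hfu.ge⟩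

theorem subset_conicHull {n : ℕ} (T : Set (Fin n → ℝ)) : T ⊆ conicHull T :=
  fun x hx => ⟨1, fun _ => 1, fun _ => x, fun _ => zero_le_one, fun _ => hx, by simp⟩

theorem smul_mem_conicHull {n : ℕ} {T : Set (Fin n → ℝ)} {a : ℝ} (ha : 0 ≤ a) {x : Fin n → ℝ}
    (hx : x ∈ conicHull T) : a • x ∈ conicHull T := by
  obtain ⟨k, c, v, hc, hv, rfl⟩ := hx
  refine ⟨k, fun i => a * c i, v, fun i => mul_nonneg ha (hc i), hv, ?_⟩
  simp only [Finset.smul_sum, smul_smul]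

theorem mem_conicHull_of_forall_add_smul_mem {n : ℕ} {T T' : Set (Fin n → ℝ)} {x : Fin n → ℝ}
    (hx : x ∈ conicHull T) (hlift : ∀ v ∈ T, ∃ t : ℝ, 0 ≤ t ∧ v + t • x ∈ T') :
    x ∈ conicHull T' := by
  obtain ⟨k, c, v, hc, hv, hxsum⟩ := hx
  choose t ht hu using fun i => hlift (v i) (hv i)
  set s := 1 + ∑ i, c i * t i
  have hs : 0 < s := by
    have : 0 ≤ ∑ i, c i * t i := Finset.sum_nonneg fun i _ => mul_nonneg (hc i) (ht i)
    linarith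
  have hsx : s • x = ∑ i, c i • (v i + t i • x) := by
    simp only [smul_add, Finset.sum_add_distrib, ← hxsum, smul_smul, ← Finset.sum_smul, s,
      add_smul, one_smul]
  have hmem : s • x ∈ conicHull T' := ⟨k, c, fun i => v i + t i • x, hc, hu, hsx⟩
  simpa [smul_smul, hs.ne'] using smul_mem_conicHull (inv_nonneg.2 hs.le) hmem

theorem stmt_10_general (n : ℕ) (G0 G1 Gs : Set (Fin n → ℝ)) (h : Fin n → ℝ)
    (hG0cone : ∀ c : ℝ, 0 ≤ c → ∀ x ∈ G0, c • x ∈ G0)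
    (hGscone : ∀ c : ℝ, 0 ≤ c → ∀ x ∈ Gs, c • x ∈ Gs)
    (hG0conv : Convex ℝ G0) (hGsconv : Convex ℝ Gs)
    (hsub1 : G0 ∩ G1 ⊆ G0 ∩ Gs)
    (hsub2 : G0 ∩ Gs ⊆ conicHull (G0 ∩ G1))
    (hH0 : G0 ∩ Gs ∩ {x | h ⬝ᵥ x = 0} ⊆ G1) :
    G0 ∩ G1 ∩ {x | 0 ≤ h ⬝ᵥ x} ⊆ G0 ∩ Gs ∩ {x | 0 ≤ h ⬝ᵥ x} ∧
    G0 ∩ Gs ∩ {x | 0 ≤ h ⬝ᵥ x} ⊆ conicHull (G0 ∩ G1 ∩ {x | 0 ≤ h ⬝ᵥ x}) := by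
  refine ⟨fun x hx => ⟨hsub1 hx.1, hx.2⟩, ?_⟩
  rintro x ⟨⟨hx0, hxs⟩, hhx⟩
  rcases (show 0 ≤ h ⬝ᵥ x from hhx).eq_or_lt with hhx0 | hhx_pos
  · exact subset_conicHull _ ⟨⟨hx0, hH0 ⟨⟨hx0, hxs⟩, hhx0.symm⟩⟩, hhx⟩
  · exact mem_conicHull_of_forall_add_smul_mem (hsub2 ⟨hx0, hxs⟩) fun v hv =>
      exists_nonneg_add_smul_mem_of_pos (dotProductBilin ℝ ℝ h) hG0cone hGscone hG0conv hGsconv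
        hH0 hx0 hxs hhx_pos hv (hsub1 hv).2

theorem stmt_10 (n : ℕ) (G0 G1 Gs : Set (Fin n → ℝ)) (h : Fin n → ℝ)
    (hG0cone : ∀ c : ℝ, 0 ≤ c → ∀ x ∈ G0, c • x ∈ G0)
    (hG1cone : ∀ c : ℝ, 0 ≤ c → ∀ x ∈ G1, c • x ∈ G1)
    (hGscone : ∀ c : ℝ, 0 ≤ c → ∀ x ∈ Gs, c • x ∈ Gs)
    (hG0conv : Convex ℝ G0) (hGsconv : Convex ℝ Gs)
    (hsub1 : G0 ∩ G1 ⊆ G0 ∩ Gs)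
    (hsub2 : G0 ∩ Gs ⊆ conicHull (G0 ∩ G1))
    (hH0 : G0 ∩ Gs ∩ {x | h ⬝ᵥ x = 0} ⊆ G1) :
    G0 ∩ G1 ∩ {x | 0 ≤ h ⬝ᵥ x} ⊆ G0 ∩ Gs ∩ {x | 0 ≤ h ⬝ᵥ x} ∧
    G0 ∩ Gs ∩ {x | 0 ≤ h ⬝ᵥ x} ⊆ conicHull (G0 ∩ G1 ∩ {x | 0 ≤ h ⬝ᵥ x}) :=
  stmt_10_general n G0 G1 Gs h hG0cone hGscone hG0conv hGsconv hsub1 hsub2 hH0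
end

section
/- Let G₀₁ be a cone in ℝⁿ and h ∈ ℝⁿ. Then conic.hull(G₀₁ ∩ H⁺) ∩ H¹ ⊆ conic.hull(G₀₁ ∩ H⁰) + conv.hull(G₀₁ ∩ H¹), where H⁰ = {x : hᵀx = 0}, H⁺ = {x : hᵀx ≥ 0}, H¹ = {x : hᵀx = 1}. -/
open Matrix Pointwise

theorem stmt_12 (n : ℕ) (G01 : Set (Fin n → ℝ)) (h : Fin n → ℝ)
    (hcone : ∀ c : ℝ, 0 ≤ c → ∀ x ∈ G01, c • x ∈ G01) :
    conicHull (G01 ∩ {x | 0 ≤ h ⬝ᵥ x}) ∩ {x | h ⬝ᵥ x = 1}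
      ⊆ conicHull (G01 ∩ {x | h ⬝ᵥ x = 0}) + convexHull ℝ (G01 ∩ {x | h ⬝ᵥ x = 1}) := by
  rintro x ⟨⟨k, c, v, hc, hv, rfl⟩, hx1⟩
  simp only [Set.mem_setOf_eq] at hx1
  set d : Fin k → ℝ := fun i => c i * (h ⬝ᵥ v i) with hd
  have hd0 : ∀ i, 0 ≤ d i := fun i => mul_nonneg (hc i) (hv i).2
  have hsum : ∑ i, d i = 1 := by
    rw [← hx1]
    simp only [hd, dotProduct, Finset.sum_apply, Pi.smul_apply, smul_eq_mul,
      Finset.mul_sum]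
    rw [Finset.sum_comm]
    congr 1; ext i; congr 1; ext j; ring
  classical
  set S : Finset (Fin k) := Finset.univ.filter (fun i => 0 < d i) with hS
  have hSsum : ∑ i ∈ S, d i = 1 := by
    rw [← hsum]
    refine Finset.sum_subset (Finset.subset_univ S) fun i _ hiS => ?_
    have h1 : ¬ 0 < d i := by simpa [hS] using hiS
    linarith [hd0 i]
  obtain ⟨i0, hdi0⟩ : ∃ i, 0 < d i := by
    by_contra hne
    push_neg at hne
    have hall : ∀ i, d i = 0 := fun i => le_antisymm (hne i) (hd0 i)
    simp [hall] at hsum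
  have hi0 : i0 ∈ S := by simp [hS, hdi0]
  have h0mem : (0 : Fin n → ℝ) ∈ G01 ∩ {x | h ⬝ᵥ x = 0} := by
    refine ⟨?_, by simp⟩
    have := hcone 0 le_rfl (v i0) (hv i0).1
    simpa using this
  set y : Fin n → ℝ := ∑ i ∈ Sᶜ, c i • v i with hy
  set z : Fin n → ℝ := ∑ i ∈ S, c i • v i with hz
  have hyz : ∑ i, c i • v i = y + z := by
    rw [hy, hz, add_comm]
    exact (Finset.sum_add_sum_compl S fun i => c i • v i).symm
  have hymem : y ∈ conicHull (G01 ∩ {x | h ⬝ᵥ x = 0}) := by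
    refine ⟨k, fun i => if i ∈ S then 0 else c i,
      fun i => if h ⬝ᵥ v i = 0 then v i else 0, ?_, ?_, ?_⟩
    · intro i
      by_cases hi : i ∈ S <;> simp [hi, hc i]
    · intro i
      by_cases hhv : h ⬝ᵥ v i = 0 <;> simp only [hhv, if_pos, if_neg, if_true, if_false]
      · exact ⟨(hv i).1, hhv⟩
      · simpa [hhv] using h0mem
    · rw [hy, ← Finset.sum_subset (Finset.subset_univ Sᶜ) (fun i _ hi => by
        have hiS : i ∈ S := by simpa using hi
        simp [hiS])]
      refine Finset.sum_congr rfl fun i hiS => ?_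
      have hiS' : i ∉ S := by simpa using hiS
      have hdi : d i = 0 := le_antisymm (not_lt.mp (by simpa [hS] using hiS')) (hd0 i)
      simp only [if_neg hiS']
      by_cases hhv : h ⬝ᵥ v i = 0
      · simp [hhv]
      · have hci : c i = 0 := by
          rcases mul_eq_zero.mp hdi with h1 | h1
          · exact h1
          · exact absurd h1 hhv
        simp [hci, hhv]
  -- the convex part
  set w : Fin k → (Fin n → ℝ) := fun i => (h ⬝ᵥ v i)⁻¹ • v i with hw
  have hzmem : z ∈ convexHull ℝ (G01 ∩ {x | h ⬝ᵥ x = 1}) := by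
    have hzc : z = S.centerMass d w := by
      rw [Finset.centerMass, hSsum, inv_one, one_smul]
      refine Finset.sum_congr rfl ?_
      intro i hi
      have hpos : 0 < h ⬝ᵥ v i := by
        have hdi : 0 < d i := by simpa [hS] using hi
        have hge : (0:ℝ) ≤ h ⬝ᵥ v i := (hv i).2
        rcases hge.lt_or_eq with h1 | h1
        · exact h1
        · have hz0 : d i = 0 := by simp [hd, ← h1]
          linarith
      rw [hw, hd]
      simp only [smul_smul]
      congr 1
      field_simp
    rw [hzc]
    refine Finset.centerMass_mem_convexHull S (fun i _ => hd0 i) (by rw [hSsum]; norm_num) ?_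
    intro i hi
    have hdi : 0 < d i := by simpa [hS] using hi
    have hpos : 0 < h ⬝ᵥ v i := by
      have hge : (0:ℝ) ≤ h ⬝ᵥ v i := (hv i).2
      rcases hge.lt_or_eq with h1 | h1
      · exact h1
      · have hz0 : d i = 0 := by simp [hd, ← h1]
        linarith
    constructor
    · exact hcone _ (le_of_lt (inv_pos.mpr hpos)) _ (hv i).1
    · show h ⬝ᵥ ((h ⬝ᵥ v i)⁻¹ • v i) = 1
      rw [dotProduct_smul, smul_eq_mul, inv_mul_cancel₀ (ne_of_gt hpos)]
  rw [hyz]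
  exact Set.add_mem_add hymem hzmem
end

section
/- In ℝ³, the set {y : ‖(y₁;y₂)‖ ≤ y₃ and ‖(y₂;1)‖ ≤ y₃} equals the closed convex hull of {y : ‖(y₁;y₂)‖ ≤ y₃ and (y₁ ≤ −1 or y₁ ≥ 1)}. -/
lemma sqrt_tri (a b x y x' y' : ℝ) (ha : 0 ≤ a) (hb : 0 ≤ b) :
    Real.sqrt ((a*x + b*x')^2 + (a*y + b*y')^2)
      ≤ a * Real.sqrt (x^2+y^2) + b * Real.sqrt (x'^2+y'^2) := by
  set s := Real.sqrt (x^2+y^2) with hsdef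
  set s' := Real.sqrt (x'^2+y'^2) with hsdef'
  have hs : 0 ≤ s := Real.sqrt_nonneg _
  have hs' : 0 ≤ s' := Real.sqrt_nonneg _
  have hs2 : s^2 = x^2+y^2 := Real.sq_sqrt (by positivity)
  have hs2' : s'^2 = x'^2+y'^2 := Real.sq_sqrt (by positivity)
  have hcs : x*x' + y*y' ≤ s*s' := by
    nlinarith [sq_nonneg (x*y'-y*x'), mul_nonneg hs hs', sq_nonneg (s*s' - x*x' - y*y')]
  have hle : (a*x+b*x')^2 + (a*y+b*y')^2 ≤ (a*s + b*s')^2 := by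
    have e1 : a^2*s^2 = a^2*(x^2+y^2) := by rw [hs2]
    have e2 : b^2*s'^2 = b^2*(x'^2+y'^2) := by rw [hs2']
    nlinarith [mul_le_mul_of_nonneg_left hcs (mul_nonneg ha hb), e1, e2]
  calc Real.sqrt ((a*x + b*x')^2 + (a*y + b*y')^2)
      ≤ Real.sqrt ((a*s + b*s')^2) := Real.sqrt_le_sqrt hle
    _ = a*s + b*s' := Real.sqrt_sq (by positivity)

theorem stmt_14 :
    {y : Fin 3 → ℝ | Real.sqrt ((y 0) ^ 2 + (y 1) ^ 2) ≤ y 2 ∧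
        Real.sqrt ((y 1) ^ 2 + 1) ≤ y 2}
      = closure (convexHull ℝ
          {y : Fin 3 → ℝ | Real.sqrt ((y 0) ^ 2 + (y 1) ^ 2) ≤ y 2 ∧
            (y 0 ≤ -1 ∨ 1 ≤ y 0)}) := by
  set S : Set (Fin 3 → ℝ) := {y | Real.sqrt ((y 0) ^ 2 + (y 1) ^ 2) ≤ y 2 ∧
        Real.sqrt ((y 1) ^ 2 + 1) ≤ y 2} with hSdef
  set T : Set (Fin 3 → ℝ) := {y | Real.sqrt ((y 0) ^ 2 + (y 1) ^ 2) ≤ y 2 ∧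
            (y 0 ≤ -1 ∨ 1 ≤ y 0)} with hTdef
  have hTS : T ⊆ S := by
    rintro y ⟨h1, h2⟩
    refine ⟨h1, ?_⟩
    have hy2 : 0 ≤ y 2 := le_trans (Real.sqrt_nonneg _) h1
    have h0 : 1 ≤ (y 0)^2 := by
      rcases h2 with h | h <;> nlinarith
    have := Real.sqrt_le_sqrt (show (y 1)^2 + 1 ≤ (y 0)^2 + (y 1)^2 by linarith)
    exact this.trans h1
  have hSconv : Convex ℝ S := by
    intro p hp q hq a b ha hb hab
    obtain ⟨hp1, hp2⟩ := hp
    obtain ⟨hq1, hq2⟩ := hq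
    constructor
    · show Real.sqrt ((a • p + b • q) 0 ^ 2 + (a • p + b • q) 1 ^ 2) ≤ (a • p + b • q) 2
      simp only [Pi.add_apply, Pi.smul_apply, smul_eq_mul]
      calc Real.sqrt ((a * p 0 + b * q 0)^2 + (a * p 1 + b * q 1)^2)
          ≤ a * Real.sqrt ((p 0)^2 + (p 1)^2) + b * Real.sqrt ((q 0)^2 + (q 1)^2) :=
            sqrt_tri a b _ _ _ _ ha hb
        _ ≤ a * p 2 + b * q 2 := by
            gcongr <;> assumption
    · show Real.sqrt ((a • p + b • q) 1 ^ 2 + 1) ≤ (a • p + b • q) 2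
      simp only [Pi.add_apply, Pi.smul_apply, smul_eq_mul]
      have h1 : (1:ℝ) = (a * 1 + b * 1)^2 := by rw [mul_one, mul_one, hab]; ring
      calc Real.sqrt ((a * p 1 + b * q 1)^2 + 1)
          = Real.sqrt ((a * p 1 + b * q 1)^2 + (a*1 + b*1)^2) := by rw [← h1]
        _ ≤ a * Real.sqrt ((p 1)^2 + 1^2) + b * Real.sqrt ((q 1)^2 + 1^2) :=
            sqrt_tri a b _ _ _ _ ha hb
        _ = a * Real.sqrt ((p 1)^2 + 1) + b * Real.sqrt ((q 1)^2 + 1) := by norm_num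
        _ ≤ a * p 2 + b * q 2 := by gcongr <;> assumption
  have hSclosed : IsClosed S := by
    have c1 : Continuous fun y : Fin 3 → ℝ => Real.sqrt ((y 0)^2 + (y 1)^2) := by
      fun_prop
    have c2 : Continuous fun y : Fin 3 → ℝ => Real.sqrt ((y 1)^2 + 1) := by
      fun_prop
    have c3 : Continuous fun y : Fin 3 → ℝ => y 2 := by fun_prop
    exact (isClosed_le c1 c3).inter (isClosed_le c2 c3)
  apply Set.Subset.antisymm
  · -- S ⊆ closure (convexHull ℝ T)
    rintro y ⟨h1, h2⟩
    apply subset_closure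
    have hy2 : 0 ≤ y 2 := le_trans (Real.sqrt_nonneg _) h2
    have hsq1 : (y 0)^2 + (y 1)^2 ≤ (y 2)^2 := by
      nlinarith [Real.sq_sqrt (show (0:ℝ) ≤ (y 0)^2 + (y 1)^2 by positivity),
        Real.sqrt_nonneg ((y 0)^2 + (y 1)^2)]
    have hsq2 : (y 1)^2 + 1 ≤ (y 2)^2 := by
      nlinarith [Real.sq_sqrt (show (0:ℝ) ≤ (y 1)^2 + 1 by positivity),
        Real.sqrt_nonneg ((y 1)^2 + 1)]
    set t := Real.sqrt ((y 2)^2 - (y 1)^2) with htdef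
    have ht2 : t^2 = (y 2)^2 - (y 1)^2 := Real.sq_sqrt (by linarith)
    have ht1 : 1 ≤ t := by
      have : Real.sqrt 1 ≤ t := Real.sqrt_le_sqrt (by linarith)
      simpa using this
    have htpos : 0 < t := by linarith
    have hy0t : |y 0| ≤ t := by
      have : (y 0)^2 ≤ t^2 := by nlinarith
      nlinarith [abs_nonneg (y 0), sq_abs (y 0)]
    set p : Fin 3 → ℝ := ![t, y 1, y 2] with hpdef
    set q : Fin 3 → ℝ := ![-t, y 1, y 2] with hqdef
    have hsqrty2 : Real.sqrt (t^2 + (y 1)^2) = y 2 := by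
      rw [ht2, show (y 2)^2 - (y 1)^2 + (y 1)^2 = (y 2)^2 by ring, Real.sqrt_sq hy2]
    have hpT : p ∈ T := by
      constructor
      · show Real.sqrt (t^2 + (y 1)^2) ≤ y 2
        rw [hsqrty2]
      · right; exact ht1
    have hqT : q ∈ T := by
      constructor
      · show Real.sqrt ((-t)^2 + (y 1)^2) ≤ y 2
        rw [show ((-t:ℝ))^2 = t^2 by ring, hsqrty2]
      · left; show -t ≤ -1; linarith
    set a := (y 0 / t + 1) / 2 with hadef
    set b := 1 - a with hbdef
    have hy0t' : -t ≤ y 0 ∧ y 0 ≤ t := abs_le.mp hy0t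
    have ha : 0 ≤ a := by
      have : -1 ≤ y 0 / t := by
        rw [le_div_iff₀ htpos]; linarith [hy0t'.1]
      rw [hadef]; linarith
    have hb : 0 ≤ b := by
      have : y 0 / t ≤ 1 := by
        rw [div_le_iff₀ htpos]; linarith [hy0t'.2]
      rw [hbdef, hadef]; linarith
    have hab : a + b = 1 := by rw [hbdef]; ring
    have hy : y = a • p + b • q := by
      funext i
      fin_cases i
      · show y 0 = a * t + b * (-t)
        rw [hbdef, hadef]; field_simp; ring
      · show y 1 = a * y 1 + b * y 1
        rw [hbdef]; ring
      · show y 2 = a * y 2 + b * y 2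
        rw [hbdef]; ring
    rw [hy]
    exact (convex_convexHull ℝ T) (subset_convexHull ℝ T hpT) (subset_convexHull ℝ T hqT) ha hb hab
  · exact closure_minimal (convexHull_min hTS hSconv) hSclosed
end

section
/- Let Q̃ be a symmetric (n−1)×(n−1) matrix with λ := λ_min(Q̃) < 0, g̃ ∈ ℝ^{n−1}. Define the n×n matrix Q := Diag(Q̃, λ) (block diagonal with Q̃ and the scalar λ) and g := (g̃; 0) ∈ ℝⁿ. Then the minimum of yᵀQy + 2gᵀy over the unit ball {y ∈ ℝⁿ : yᵀy ≤ 1} is attained at some point with yₙ = 0, and this minimum equals the minimum of ỹᵀQ̃ỹ + 2g̃ᵀỹ over {ỹ ∈ ℝ^{n−1} : ỹᵀỹ ≤ 1}. -/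
/-!
Let `v` be an eigenvector of `Q̃` for `λ`. Given a feasible `(u, t)` of the
extended problem, move `u` along `v` to `w = u + s v` with `‖w‖² = ‖u‖² + t²`; such an `s` solves
a quadratic `‖v‖² s² + 2 (v ⬝ u) s = t²` whose two roots have opposite signs, so `s` can be chosen
with `s (g̃ ⬝ v) ≤ 0`. Since `v` is an eigenvector, the quadratic part of the objective grows by
exactly `λ t²` and the linear part does not grow, so `w` is feasible for the reduced problem and
does at least as well as `(u, t)`. Hence a minimizer of the reduced problem (which exists by
compactness), padded with a zero last coordinate, minimizes the extended one.
-/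

open Matrix

theorem exists_nonneg_quadratic_eq_sq {a : ℝ} (ha : 0 < a) (b t : ℝ) :
    ∃ s, 0 ≤ s ∧ a * s ^ 2 + 2 * b * s = t ^ 2 := by
  set r := √(b ^ 2 + a * t ^ 2)
  have hr : r ^ 2 = b ^ 2 + a * t ^ 2 := Real.sq_sqrt (by positivity)
  have hb : b ≤ r := Real.le_sqrt_of_sq_le (by nlinarith [sq_nonneg t])
  refine ⟨(r - b) / a, div_nonneg (sub_nonneg.2 hb) ha.le, ?_⟩
  field_simp
  linear_combination hr

theorem exists_quadratic_eq_sq_mul_nonpos {a : ℝ} (ha : 0 < a) (b t d : ℝ) :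
    ∃ s, a * s ^ 2 + 2 * b * s = t ^ 2 ∧ s * d ≤ 0 := by
  rcases le_or_gt d 0 with hd | hd
  · obtain ⟨s, hs, hroot⟩ := exists_nonneg_quadratic_eq_sq ha b t
    exact ⟨s, hroot, mul_nonpos_of_nonneg_of_nonpos hs hd⟩
  · obtain ⟨s, hs, hroot⟩ := exists_nonneg_quadratic_eq_sq ha (-b) t
    exact ⟨-s, by linear_combination hroot, by nlinarith⟩

section TrustRegion

variable {ι κ : Type*} [Fintype ι] [Fintype κ]

theorem isCompact_setOf_dotProduct_self_le (r : ℝ) :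
    IsCompact {w : ι → ℝ | w ⬝ᵥ w ≤ r} := by
  refine Metric.isCompact_of_isClosed_isBounded (isClosed_le (by fun_prop) continuous_const)
    ((Metric.isBounded_closedBall (x := 0) (r := √r)).subset fun w hw => ?_)
  rw [Metric.mem_closedBall, dist_zero_right, pi_norm_le_iff_of_nonneg (Real.sqrt_nonneg r)]
  refine fun i => Real.abs_le_sqrt ((sq (w i)).trans_le ?_ |>.trans hw)
  exact Finset.single_le_sum (f := fun j => w j * w j) (fun j _ => mul_self_nonneg (w j))
    (Finset.mem_univ i)

theorem dotProduct_add_smul_self (u v : ι → ℝ) (s : ℝ) :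
    (u + s • v) ⬝ᵥ (u + s • v) = u ⬝ᵥ u + ((v ⬝ᵥ v) * s ^ 2 + 2 * (v ⬝ᵥ u) * s) := by
  simp only [add_dotProduct, dotProduct_add, smul_dotProduct, dotProduct_smul, smul_eq_mul,
    dotProduct_comm u v]
  ring

def trustRegionObjective (Q : Matrix ι ι ℝ) (g w : ι → ℝ) : ℝ :=
  w ⬝ᵥ Q *ᵥ w + 2 * (g ⬝ᵥ w)

theorem continuous_trustRegionObjective (Q : Matrix ι ι ℝ) (g : ι → ℝ) :
    Continuous (trustRegionObjective Q g) := by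
  unfold trustRegionObjective
  fun_prop

theorem exists_isMinOn_trustRegionObjective (Q : Matrix ι ι ℝ) (g : ι → ℝ) :
    ∃ y ∈ {w : ι → ℝ | w ⬝ᵥ w ≤ 1}, IsMinOn (trustRegionObjective Q g) {w | w ⬝ᵥ w ≤ 1} y :=
  (isCompact_setOf_dotProduct_self_le 1).exists_isMinOn ⟨0, by simp⟩
    (continuous_trustRegionObjective Q g).continuousOn

theorem trustRegionObjective_fromBlocks (A : Matrix ι ι ℝ) (D : Matrix κ κ ℝ) (g u : ι → ℝ)
    (h x : κ → ℝ) :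
    trustRegionObjective (fromBlocks A 0 0 D) (Sum.elim g h) (Sum.elim u x) =
      trustRegionObjective A g u + trustRegionObjective D h x := by
  simp only [trustRegionObjective, fromBlocks_mulVec, sumElim_dotProduct_sumElim,
    Sum.elim_comp_inl, Sum.elim_comp_inr, zero_mulVec, add_zero, zero_add]
  ring

theorem trustRegionObjective_scalar (lam : ℝ) (x : Unit → ℝ) :
    trustRegionObjective (of fun _ _ => lam) 0 x = lam * x () ^ 2 := by
  simp [trustRegionObjective, dotProduct, mulVec]
  ring

theorem trustRegionObjective_add_smul_eigenvector {Q : Matrix ι ι ℝ} (hQ : Q.IsSymm)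
    {lam : ℝ} {v : ι → ℝ} (hv : Q *ᵥ v = lam • v) (g u : ι → ℝ) (s : ℝ) :
    trustRegionObjective Q g (u + s • v) = trustRegionObjective Q g u +
      lam * ((v ⬝ᵥ v) * s ^ 2 + 2 * (v ⬝ᵥ u) * s) + 2 * (s * (g ⬝ᵥ v)) := by
  have hvQu : v ⬝ᵥ Q *ᵥ u = lam * (v ⬝ᵥ u) := by
    rw [dotProduct_mulVec, ← mulVec_transpose, hQ.eq, hv, smul_dotProduct, smul_eq_mul]
  simp only [trustRegionObjective, mulVec_add, mulVec_smul, hv, add_dotProduct, dotProduct_add,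
    smul_dotProduct, dotProduct_smul, smul_eq_mul, hvQu, dotProduct_comm u v]
  ring

theorem exists_trustRegionObjective_le_of_eigenvector {Q : Matrix ι ι ℝ} (hQ : Q.IsSymm)
    {lam : ℝ} {v : ι → ℝ} (hv0 : v ≠ 0) (hv : Q *ᵥ v = lam • v) (g u : ι → ℝ) (t : ℝ) :
    ∃ w, w ⬝ᵥ w = u ⬝ᵥ u + t ^ 2 ∧
      trustRegionObjective Q g w ≤ trustRegionObjective Q g u + lam * t ^ 2 := by
  obtain ⟨s, hroot, hsign⟩ := exists_quadratic_eq_sq_mul_nonpos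
    (by simpa using dotProduct_self_star_pos_iff.2 hv0) (v ⬝ᵥ u) t (g ⬝ᵥ v)
  refine ⟨u + s • v, by rw [dotProduct_add_smul_self, hroot], ?_⟩
  rw [trustRegionObjective_add_smul_eigenvector hQ hv, hroot]
  linarith

end TrustRegion

theorem stmt_15_general (n : ℕ) (Qt : Matrix (Fin n) (Fin n) ℝ) (hQt : Qt.IsSymm)
    (gt : Fin n → ℝ) (lam : ℝ)
    (hlam_eig : ∃ v : Fin n → ℝ, v ≠ 0 ∧ Qt.mulVec v = lam • v) :
    ∃ y : (Fin n ⊕ Unit) → ℝ,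
      y ⬝ᵥ y ≤ 1 ∧ y (Sum.inr ()) = 0 ∧
      IsLeast {v : ℝ | ∃ w : (Fin n ⊕ Unit) → ℝ, w ⬝ᵥ w ≤ 1 ∧
          v = w ⬝ᵥ (Matrix.fromBlocks Qt 0 0 (Matrix.of fun _ _ => lam)).mulVec w
              + 2 * (Sum.elim gt 0 ⬝ᵥ w)}
        (y ⬝ᵥ (Matrix.fromBlocks Qt 0 0 (Matrix.of fun _ _ => lam)).mulVec y
          + 2 * (Sum.elim gt 0 ⬝ᵥ y)) ∧
      IsLeast {v : ℝ | ∃ w : Fin n → ℝ, w ⬝ᵥ w ≤ 1 ∧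
          v = w ⬝ᵥ Qt.mulVec w + 2 * (gt ⬝ᵥ w)}
        (y ⬝ᵥ (Matrix.fromBlocks Qt 0 0 (Matrix.of fun _ _ => lam)).mulVec y
          + 2 * (Sum.elim gt 0 ⬝ᵥ y)) := by
  obtain ⟨v, hv0, hv⟩ := hlam_eig
  obtain ⟨yt, hyt, hmin⟩ := exists_isMinOn_trustRegionObjective Qt gt
  have hnorm (u : Fin n → ℝ) (x : Unit → ℝ) :
      Sum.elim u x ⬝ᵥ Sum.elim u x = u ⬝ᵥ u + x () ^ 2 := by
    simp [dotProduct, sq]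
  have hobj (u : Fin n → ℝ) (x : Unit → ℝ) :
      trustRegionObjective (fromBlocks Qt 0 0 (of fun _ _ => lam)) (Sum.elim gt 0)
        (Sum.elim u x) = trustRegionObjective Qt gt u + lam * x () ^ 2 := by
    rw [trustRegionObjective_fromBlocks, trustRegionObjective_scalar]
  have hval : trustRegionObjective (fromBlocks Qt 0 0 (of fun _ _ => lam)) (Sum.elim gt 0)
      (Sum.elim yt (0 : Unit → ℝ)) = trustRegionObjective Qt gt yt := by
    simpa using hobj yt 0
  have hy : Sum.elim yt (0 : Unit → ℝ) ⬝ᵥ Sum.elim yt 0 ≤ 1 := by simpa [hnorm] using hyt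
  have hlower (w : Fin n ⊕ Unit → ℝ) (hw : w ⬝ᵥ w ≤ 1) : trustRegionObjective Qt gt yt ≤
      trustRegionObjective (fromBlocks Qt 0 0 (of fun _ _ => lam)) (Sum.elim gt 0) w := by
    rw [← Sum.elim_comp_inl_inr w, hnorm] at hw
    rw [← Sum.elim_comp_inl_inr w, hobj]
    obtain ⟨w', hw'norm, hw'⟩ := exists_trustRegionObjective_le_of_eigenvector hQt hv0 hv gt
      (w ∘ Sum.inl) (w (Sum.inr ()))
    exact (hmin (show w' ⬝ᵥ w' ≤ 1 from hw'norm ▸ hw)).trans hw'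
  refine ⟨Sum.elim yt 0, hy, rfl, ⟨⟨_, hy, rfl⟩, ?_⟩, ⟨⟨yt, hyt, hval⟩, ?_⟩⟩
  · rintro _ ⟨w, hw, rfl⟩
    exact hval.trans_le (hlower w hw)
  · rintro _ ⟨w, hw, rfl⟩
    exact hval.trans_le (hmin hw)

theorem stmt_15 (n : ℕ) (Qt : Matrix (Fin n) (Fin n) ℝ) (hQt : Qt.IsSymm)
    (gt : Fin n → ℝ) (lam : ℝ) (hlamneg : lam < 0)
    (hlam_eig : ∃ v : Fin n → ℝ, v ≠ 0 ∧ Qt.mulVec v = lam • v)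
    (hlam_min : ∀ v : Fin n → ℝ, lam * (v ⬝ᵥ v) ≤ v ⬝ᵥ Qt.mulVec v) :
    ∃ y : (Fin n ⊕ Unit) → ℝ,
      y ⬝ᵥ y ≤ 1 ∧ y (Sum.inr ()) = 0 ∧
      IsLeast {v : ℝ | ∃ w : (Fin n ⊕ Unit) → ℝ, w ⬝ᵥ w ≤ 1 ∧
          v = w ⬝ᵥ (Matrix.fromBlocks Qt 0 0 (Matrix.of fun _ _ => lam)).mulVec w
              + 2 * (Sum.elim gt 0 ⬝ᵥ w)}
        (y ⬝ᵥ (Matrix.fromBlocks Qt 0 0 (Matrix.of fun _ _ => lam)).mulVec y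
          + 2 * (Sum.elim gt 0 ⬝ᵥ y)) ∧
      IsLeast {v : ℝ | ∃ w : Fin n → ℝ, w ⬝ᵥ w ≤ 1 ∧
          v = w ⬝ᵥ Qt.mulVec w + 2 * (gt ⬝ᵥ w)}
        (y ⬝ᵥ (Matrix.fromBlocks Qt 0 0 (Matrix.of fun _ _ => lam)).mulVec y
          + 2 * (Sum.elim gt 0 ⬝ᵥ y)) :=
  stmt_15_general n Qt hQt gt lam hlam_eig
end

section
/- Let c₁, c₂ ∈ ℝⁿ, write cᵢ = (c̃ᵢ; c_{i,n}) with c̃ᵢ ∈ ℝ^{n−1}, and suppose ‖c̃₁‖ > |c_{1,n}| and ‖c̃₂‖ > |c_{2,n}|. Let J := Diag(1,…,1,−1), s ∈ (0,1), and suppose z ≠ 0 satisfies ((1−s)J + s(c₁c₂ᵀ + c₂c₁ᵀ))z = 0. Then c₁ᵀz ≠ 0 and c₂ᵀz ≠ 0. -/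
open Matrix

private lemma vmv_mulVec {n : ℕ} (w v z : Fin n → ℝ) :
    (vecMulVec w v).mulVec z = fun i => w i * (v ⬝ᵥ z) := by
  funext i
  simp [Matrix.mulVec, vecMulVec_apply, dotProduct, Finset.mul_sum, mul_assoc]

theorem stmt_17 (n : ℕ) (c1 c2 : Fin (n+1) → ℝ)
    (hc1 : |c1 (Fin.last n)| < Real.sqrt (∑ j : Fin n, (c1 j.castSucc) ^ 2))
    (hc2 : |c2 (Fin.last n)| < Real.sqrt (∑ j : Fin n, (c2 j.castSucc) ^ 2))
    (s : ℝ) (hs : s ∈ Set.Ioo (0 : ℝ) 1)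
    (z : Fin (n+1) → ℝ) (hz : z ≠ 0)
    (hnull : ((1 - s) • Matrix.diagonal (fun i => if i = Fin.last n then (-1 : ℝ) else 1)
        + s • (vecMulVec c1 c2 + vecMulVec c2 c1)).mulVec z = 0) :
    c1 ⬝ᵥ z ≠ 0 ∧ c2 ⬝ᵥ z ≠ 0 := by
  obtain ⟨hs0, hs1⟩ := hs
  have h1s : (0:ℝ) < 1 - s := by linarith
  set ε : Fin (n+1) → ℝ := fun i => if i = Fin.last n then (-1 : ℝ) else 1 with hε
  set a := c1 ⬝ᵥ z with ha
  set b := c2 ⬝ᵥ z with hb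
  -- pointwise equation
  have key : ∀ i, (1 - s) * (ε i * z i) + s * (c1 i * b + c2 i * a) = 0 := by
    intro i
    have h := congrFun hnull i
    rw [Matrix.add_mulVec, Matrix.smul_mulVec, Matrix.smul_mulVec,
      Matrix.add_mulVec, vmv_mulVec, vmv_mulVec] at h
    simp only [Pi.add_apply, Pi.smul_apply, Matrix.mulVec_diagonal, smul_eq_mul,
      Pi.zero_apply] at h
    rw [← ha, ← hb] at h
    linear_combination h
  have heps : ∀ i, ε i * ε i = 1 := by
    intro i; by_cases h : i = Fin.last n <;> simp [hε, h]
  have zeq : ∀ i, z i = -(s / (1 - s)) * (ε i * (c1 i * b + c2 i * a)) := by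
    intro i
    have h := key i
    have h2 : ε i * z i = -(s / (1 - s)) * (c1 i * b + c2 i * a) := by
      field_simp
      linarith [h]
    have := congrArg (fun t => ε i * t) h2
    rw [← mul_assoc, heps i, one_mul] at this
    rw [this]; ring
  -- quadratic forms
  have sqlt : ∀ c : Fin (n+1) → ℝ, |c (Fin.last n)| < Real.sqrt (∑ j : Fin n, (c j.castSucc) ^ 2) →
      c (Fin.last n) ^ 2 < ∑ j : Fin n, (c j.castSucc) ^ 2 := by
    intro c hc
    have hS : (0:ℝ) ≤ ∑ j : Fin n, (c j.castSucc) ^ 2 := by positivity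
    have := pow_lt_pow_left₀ hc (abs_nonneg _) (two_ne_zero)
    rwa [sq_abs, Real.sq_sqrt hS] at this
  have hQ : ∀ c : Fin (n+1) → ℝ, ∑ i : Fin (n+1), ε i * (c i * c i)
      = (∑ j : Fin n, (c j.castSucc) ^ 2) - c (Fin.last n) ^ 2 := by
    intro c
    rw [Fin.sum_univ_castSucc]
    have h1 : ∀ j : Fin n, ε j.castSucc = 1 := by
      intro j
      simp [hε, (Fin.castSucc_lt_last j).ne]
    simp only [h1, one_mul]
    have h2 : ε (Fin.last n) = -1 := by simp [hε]
    rw [h2]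
    have h3 : ∀ j : Fin n, c j.castSucc * c j.castSucc = c j.castSucc ^ 2 :=
      fun j => (sq _).symm
    rw [Finset.sum_congr rfl (fun j _ => h3 j)]
    ring
  have hQ1 : (0:ℝ) < ∑ i : Fin (n+1), ε i * (c1 i * c1 i) := by
    rw [hQ c1]; linarith [sqlt c1 hc1]
  have hQ2 : (0:ℝ) < ∑ i : Fin (n+1), ε i * (c2 i * c2 i) := by
    rw [hQ c2]; linarith [sqlt c2 hc2]
  have hr : (0:ℝ) < s / (1 - s) := div_pos hs0 h1s
  have hzero : a = 0 → b = 0 → False := by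
    intro ha0 hb0
    apply hz
    funext i
    have h := key i
    rw [ha0, hb0] at h
    have h2 : (1 - s) * (ε i * z i) = 0 := by linarith
    have h3 : ε i * z i = 0 := by
      rcases mul_eq_zero.mp h2 with h | h
      · linarith
      · exact h
    have h4 : ε i ≠ 0 := by by_cases hi : i = Fin.last n <;> simp [hε, hi]
    simpa using (mul_eq_zero.mp h3).resolve_left h4
  have hab : a = 0 → b = 0 := by
    intro ha0
    have hcalc : a = -(s / (1 - s)) * b * ∑ i : Fin (n+1), ε i * (c1 i * c1 i) := by
      calc a = ∑ i, c1 i * z i := rfl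
        _ = ∑ i, (-(s / (1 - s)) * b) * (ε i * (c1 i * c1 i)) :=
          Finset.sum_congr rfl fun i _ => by rw [zeq i, ha0]; ring
        _ = -(s / (1 - s)) * b * ∑ i, ε i * (c1 i * c1 i) := by rw [← Finset.mul_sum]
    rw [ha0] at hcalc
    rcases mul_eq_zero.mp hcalc.symm with h | h
    · rcases mul_eq_zero.mp h with h' | h'
      · exact absurd (neg_eq_zero.mp h') hr.ne'
      · exact h'
    · linarith
  have hba : b = 0 → a = 0 := by
    intro hb0
    have hcalc : b = -(s / (1 - s)) * a * ∑ i : Fin (n+1), ε i * (c2 i * c2 i) := by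
      calc b = ∑ i, c2 i * z i := rfl
        _ = ∑ i, (-(s / (1 - s)) * a) * (ε i * (c2 i * c2 i)) :=
          Finset.sum_congr rfl fun i _ => by rw [zeq i, hb0]; ring
        _ = -(s / (1 - s)) * a * ∑ i, ε i * (c2 i * c2 i) := by rw [← Finset.mul_sum]
    rw [hb0] at hcalc
    rcases mul_eq_zero.mp hcalc.symm with h | h
    · rcases mul_eq_zero.mp h with h' | h'
      · exact absurd (neg_eq_zero.mp h') hr.ne'
      · exact h'
    · linarith
  constructor
  · intro ha0; exact hzero ha0 (hab ha0)
  · intro hb0; exact hzero (hba hb0) hb0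
end
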